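/- arXiv:2106.13047 — 13 statements merged into one kernel-verified Lean document; each statement's English description precedes it below -/
import Mathlib

section
/- Let n be a positive integer and let v = (r, d, a) be an integer triple with r ≥ 0, d > 0 and v² = 2nd² − 2ra ≥ −2. Then D_v contains no isotropic vector: there is no v₁ = (r₁, d₁, a₁) ∈ D_v with v₁² = 0 (equivalently nd₁² = r₁a₁). Consequently every element of D_v satisfies v₁² = −2. -/
/-!
Suppose `v₁ ∈ D_v` is isotropic, i.e. `r₁ a₁ = n d₁²`, and write `P = ⟨v, v₁⟩`,
`A = a₁ d − a d₁`, `R = r₁ d − r d₁`. Then `X = a₁ R` and `Y = r₁ A` satisfy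
`X + Y = d₁ P` and `X Y = n d₁² A R ≥ d₁²`, so `(d₁ P)² ≥ 4 X Y ≥ 4 d₁²` and `P² ≥ 4`;
as `P < 2`, this forces `P ≤ −2`. On the other hand `2 A R = 2 d d₁ P − d₁² v²`,
which for `P ≤ −2`, `v² ≥ −2` and `d₁ ≤ d` is at most `−2 d d₁ < 0`, contradicting `A R > 0`.
-/

/-- Mukai square of the triple `(r, d, a)` on a K3 surface with `H² = 2n`:
`v² = 2nd² − 2ra`. -/
def mukaiSq (n r d a : ℤ) : ℤ := 2 * n * d ^ 2 - 2 * r * a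

/-- Mukai pairing `⟨(r,d,a), (r₁,d₁,a₁)⟩ = 2ndd₁ − ra₁ − r₁a`. -/
def mukaiPair (n r d a r₁ d₁ a₁ : ℤ) : ℤ := 2 * n * d * d₁ - r * a₁ - r₁ * a

/-- `(r₁, d₁, a₁) ∈ D_{(r,d,a)}`. -/
def memD (n r d a r₁ d₁ a₁ : ℤ) : Prop :=
  (mukaiSq n r₁ d₁ a₁ = 0 ∨ mukaiSq n r₁ d₁ a₁ = -2) ∧
  0 < d₁ ∧ d₁ ≤ d ∧
  mukaiPair n r d a r₁ d₁ a₁ < mukaiSq n r₁ d₁ a₁ + 2 ∧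
  0 < (a₁ * d - a * d₁) * (r₁ * d - r * d₁)

/-- `(r₁, d₁, a₁) ∈ D_{(r,d,a)}^{BN}`. -/
def memDBN (n r d a r₁ d₁ a₁ : ℤ) : Prop :=
  memD n r d a r₁ d₁ a₁ ∧
  0 < d * r₁ - d₁ * r ∧ d * r₁ - d₁ * r ≤ d * a₁ - d₁ * a

section Isotropic

variable {n r d a r₁ d₁ a₁ : ℤ}

theorem mul_mukaiPair_eq_of_mukaiSq_eq_zero (h : mukaiSq n r₁ d₁ a₁ = 0) :
    d₁ * mukaiPair n r d a r₁ d₁ a₁ =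
      a₁ * (r₁ * d - r * d₁) + r₁ * (a₁ * d - a * d₁) := by
  unfold mukaiSq at h
  unfold mukaiPair
  linear_combination d * h

theorem two_mul_cross_eq_of_mukaiSq_eq_zero (h : mukaiSq n r₁ d₁ a₁ = 0) :
    2 * ((a₁ * d - a * d₁) * (r₁ * d - r * d₁)) =
      2 * d * d₁ * mukaiPair n r d a r₁ d₁ a₁ - d₁ ^ 2 * mukaiSq n r d a := by
  unfold mukaiSq at h ⊢
  unfold mukaiPair
  linear_combination -d ^ 2 * h

theorem four_le_mukaiPair_sq_of_mukaiSq_eq_zero (hn : 0 < n) (hd₁ : 0 < d₁)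
    (h : mukaiSq n r₁ d₁ a₁ = 0) (hAR : 0 < (a₁ * d - a * d₁) * (r₁ * d - r * d₁)) :
    4 ≤ mukaiPair n r d a r₁ d₁ a₁ ^ 2 := by
  set A := a₁ * d - a * d₁
  set R := r₁ * d - r * d₁
  have hprod : (a₁ * R) * (r₁ * A) = n * d₁ ^ 2 * (A * R) := by
    have h' : r₁ * a₁ = n * d₁ ^ 2 := by unfold mukaiSq at h; linarith
    linear_combination (A * R) * h'
  have hd₁_sq : 0 < d₁ ^ 2 := by positivity
  have hXY : d₁ ^ 2 ≤ (a₁ * R) * (r₁ * A) := by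
    rw [hprod]
    nlinarith [mul_le_mul_of_nonneg_left (show (1 : ℤ) ≤ n * (A * R) by nlinarith) hd₁_sq.le]
  refine le_of_mul_le_mul_left ?_ hd₁_sq
  calc d₁ ^ 2 * 4 ≤ 4 * (a₁ * R) * (r₁ * A) := by linarith
    _ ≤ (a₁ * R + r₁ * A) ^ 2 := four_mul_le_sq_add _ _
    _ = d₁ ^ 2 * mukaiPair n r d a r₁ d₁ a₁ ^ 2 := by
      rw [← mul_mukaiPair_eq_of_mukaiSq_eq_zero h]; ring

theorem mukaiSq_ne_zero_of_memD (hn : 0 < n) (hv : -2 ≤ mukaiSq n r d a)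
    (hm : memD n r d a r₁ d₁ a₁) : mukaiSq n r₁ d₁ a₁ ≠ 0 := by
  intro h
  obtain ⟨-, hd₁, hd₁d, hP, hAR⟩ := hm
  rw [h] at hP
  have hP_sq := four_le_mukaiPair_sq_of_mukaiSq_eq_zero hn hd₁ h hAR
  have hP_le : mukaiPair n r d a r₁ d₁ a₁ ≤ -2 := by nlinarith
  have hcross := two_mul_cross_eq_of_mukaiSq_eq_zero (r := r) (d := d) (a := a) h
  have hdd₁ : 0 < d * d₁ := by nlinarith
  nlinarith [mul_le_mul_of_nonneg_left hP_le hdd₁.le,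
    mul_le_mul_of_nonneg_left hv (sq_nonneg d₁), mul_le_mul_of_nonneg_left hd₁d hd₁.le]

end Isotropic

theorem no_isotropic_in_D_general (n r d a : ℤ) (hn : 0 < n)
    (hv : -2 ≤ mukaiSq n r d a) :
    (¬ ∃ r₁ d₁ a₁ : ℤ, memD n r d a r₁ d₁ a₁ ∧ mukaiSq n r₁ d₁ a₁ = 0) ∧
    (∀ r₁ d₁ a₁ : ℤ, memD n r d a r₁ d₁ a₁ → mukaiSq n r₁ d₁ a₁ = -2) := by
  refine ⟨fun ⟨r₁, d₁, a₁, hm, h⟩ => mukaiSq_ne_zero_of_memD hn hv hm h, fun r₁ d₁ a₁ hm => ?_⟩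
  exact hm.1.resolve_left (mukaiSq_ne_zero_of_memD hn hv hm)

/-- `D_v` contains no isotropic vector; consequently every element
of `D_v` is spherical (`v₁² = −2`). -/
theorem no_isotropic_in_D (n r d a : ℤ) (hn : 0 < n) (hr : 0 ≤ r) (hd : 0 < d)
    (hv : -2 ≤ mukaiSq n r d a) :
    (¬ ∃ r₁ d₁ a₁ : ℤ, memD n r d a r₁ d₁ a₁ ∧ mukaiSq n r₁ d₁ a₁ = 0) ∧
    (∀ r₁ d₁ a₁ : ℤ, memD n r d a r₁ d₁ a₁ → mukaiSq n r₁ d₁ a₁ = -2) :=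
  no_isotropic_in_D_general n r d a hn hv
end

section
/- Let n be a positive integer and let v = (r, d, a) be an integer triple with r ≥ 0, d > 0 and a ≤ 0. Then D_v = ∅, i.e. no integer triple v₁ = (r₁, d₁, a₁) satisfies all of: v₁² ∈ {0, −2}, 0 < d₁ ≤ d, ⟨v, v₁⟩ < v₁² + 2, and (a₁d − ad₁)·(r₁d − rd₁) > 0. -/
section

variable {n r d a r₁ d₁ a₁ : ℤ}

theorem mukaiSq_neg_swap : mukaiSq n (-a) d (-r) = mukaiSq n r d a := by
  unfold mukaiSq; ring

theorem mukaiPair_neg_swap :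
    mukaiPair n (-a) d (-r) (-a₁) d₁ (-r₁) = mukaiPair n r d a r₁ d₁ a₁ := by
  unfold mukaiPair; ring

theorem memD_neg_swap_iff :
    memD n (-a) d (-r) (-a₁) d₁ (-r₁) ↔ memD n r d a r₁ d₁ a₁ := by
  have hprod : (-r₁ * d - -r * d₁) * (-a₁ * d - -a * d₁) =
      (a₁ * d - a * d₁) * (r₁ * d - r * d₁) := by
    ring
  simp only [memD, mukaiSq_neg_swap, mukaiPair_neg_swap, hprod]

theorem mul_pos_of_memD (hn : 0 < n) (h : memD n r d a r₁ d₁ a₁) : 0 < r₁ * a₁ := by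
  obtain ⟨hsq, hd₁, -⟩ := h
  have : 0 < n * d₁ ^ 2 := by positivity
  unfold mukaiSq at hsq
  rcases hsq with hsq | hsq <;> linarith

theorem not_memD_of_pos (hn : 0 < n) (hd : 0 < d) (ha : a ≤ 0) (hr₁ : 0 < r₁)
    (ha₁ : 0 < a₁) : ¬ memD n r d a r₁ d₁ a₁ := by
  rintro ⟨hsq, hd₁, -, hpair, hprod⟩
  set s := mukaiSq n r₁ d₁ a₁ with hs
  unfold mukaiSq at hs
  unfold mukaiPair at hpair
  have hslope : 1 ≤ r₁ * d - r * d₁ :=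
    pos_of_mul_pos_right hprod (by nlinarith [mul_nonpos_of_nonpos_of_nonneg ha hd₁.le])
  have hpair' : 2 * n * d * d₁ - s - 1 ≤ r * a₁ := by
    linarith [mul_nonpos_of_nonneg_of_nonpos hr₁.le ha]
  have key : 2 * n * d * d₁ ^ 2 + 2 * a₁ + s * (d - 2 * d₁) ≤ 2 * d₁ := by
    nlinarith [mul_le_mul_of_nonneg_left hslope ha₁.le, mul_le_mul_of_nonneg_left hpair' hd₁.le]
  have hd₁_le : d₁ ≤ n * d * d₁ ^ 2 := by nlinarith [mul_pos (mul_pos hn hd) hd₁]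
  have hd_le : d ≤ n * d * d₁ ^ 2 := by nlinarith [mul_pos (mul_pos hn hd₁) hd₁]
  rcases hsq with h | h <;> rw [h] at key <;> linarith

end

/-- if `a ≤ 0` then `D_v = ∅`. -/
theorem D_empty_of_a_nonpos (n r d a : ℤ) (hn : 0 < n) (hr : 0 ≤ r) (hd : 0 < d)
    (ha : a ≤ 0) :
    ∀ r₁ d₁ a₁ : ℤ, ¬ memD n r d a r₁ d₁ a₁ := by
  intro r₁ d₁ a₁ h
  rcases pos_and_pos_or_neg_and_neg_of_mul_pos (mul_pos_of_memD hn h) with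
    ⟨hr₁, ha₁⟩ | ⟨hr₁, ha₁⟩
  · exact not_memD_of_pos hn hd ha hr₁ ha₁ h
  · exact not_memD_of_pos hn hd (neg_nonpos.mpr hr) (neg_pos.mpr ha₁) (neg_pos.mpr hr₁)
      (memD_neg_swap_iff.mpr h)
end

section
/- Let n be a positive integer and let v = (r, d, a) be an integer triple with r ≥ 2, d > 0, a > 0 and v² = 2nd² − 2ra ≥ −2. Let v₁ = (r₁, d₁, a₁) ∈ D_v and set m = dr₁ − d₁r (which is a positive integer). Then r₁ < r, nd₁ < 2r, and, as real numbers, d₁ < 2r/(mn) + 1/√n. -/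
section

variable {n r d a r₁ d₁ a₁ : ℤ}

theorem mukai_slope_identity (n r d a r₁ d₁ a₁ : ℤ) :
    a₁ * (d * r₁ - d₁ * r) + r₁ * (d * a₁ - d₁ * a) =
      d₁ * mukaiPair n r d a r₁ d₁ a₁ - d * mukaiSq n r₁ d₁ a₁ := by
  unfold mukaiPair mukaiSq
  ring

theorem le_mul_of_mukaiSq_eq (h : mukaiSq n r₁ d₁ a₁ = 0 ∨ mukaiSq n r₁ d₁ a₁ = -2) :
    n * d₁ ^ 2 ≤ r₁ * a₁ := by
  unfold mukaiSq at h
  rcases h with h | h <;> linarith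

theorem not_slope_lt_of_mukaiSq (hn : 0 < n) (hr : 0 < r) (ha : 0 < a) (hd₁ : 0 < d₁)
    (hd₁d : d₁ ≤ d) (hv : r * a ≤ n * d ^ 2 + 1) (hv₁ : n * d₁ ^ 2 ≤ r₁ * a₁) (ha₁ : 0 < a₁)
    (hM : d * r₁ < d₁ * r) (hA : d * a₁ < d₁ * a) : False := by
  have hprod : r₁ * a₁ * d ^ 2 ≤ (r * d₁ - 1) * (a * d₁ - 1) := by
    calc r₁ * a₁ * d ^ 2 = (d * r₁) * (d * a₁) := by ring
      _ ≤ (r * d₁ - 1) * (a * d₁ - 1) :=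
        mul_le_mul (by linarith) (by linarith) (mul_pos (by linarith) ha₁).le (by nlinarith)
  have hsum : (r + a) * d₁ ≤ d₁ ^ 2 + 1 := by
    nlinarith [mul_le_mul_of_nonneg_right hv₁ (sq_nonneg d),
      mul_le_mul_of_nonneg_right hv (sq_nonneg d₁)]
  have hnd : n * d ^ 2 < r * a := by
    have : n * d ^ 2 * d₁ ^ 2 < r * a * d₁ ^ 2 := by
      nlinarith [mul_le_mul_of_nonneg_right hv₁ (sq_nonneg d), mul_pos hr hd₁, mul_pos ha hd₁]
    exact lt_of_mul_lt_mul_right this (sq_nonneg d₁)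
  have hra : d₁ ^ 2 < r * a := by
    nlinarith [mul_le_mul_of_nonneg_right (show 1 ≤ n from hn) (sq_nonneg d)]
  -- `4 r a d₁² ≤ ((r + a) d₁)² ≤ (d₁² + 1)²` is impossible once `r a ≥ d₁² + 1`.
  nlinarith [sq_nonneg (r - a), mul_le_mul hsum hsum (by positivity) (by positivity)]

namespace memD

theorem mukaiPair_le_one (h : memD n r d a r₁ d₁ a₁) : mukaiPair n r d a r₁ d₁ a₁ ≤ 1 := by
  obtain ⟨hsq, -, -, hpair, -⟩ := h
  omega

theorem rank_pos (hn : 0 < n) (hr : 0 < r) (hd : 0 < d) (ha : 0 < a)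
    (h : memD n r d a r₁ d₁ a₁) : 0 < r₁ ∧ 0 < a₁ := by
  have hP := h.mukaiPair_le_one
  obtain ⟨hsq, hd₁, -, -, -⟩ := h
  have hprod : 0 < r₁ * a₁ := (mul_pos hn (pow_pos hd₁ 2)).trans_le (le_mul_of_mukaiSq_eq hsq)
  refine (pos_and_pos_or_neg_and_neg_of_mul_pos hprod).resolve_right fun ⟨hr₁, ha₁⟩ => ?_
  unfold mukaiPair at hP
  nlinarith [mul_pos (mul_pos hn hd) hd₁]

theorem slope_pos (hn : 0 < n) (hr : 0 < r) (hd : 0 < d) (ha : 0 < a)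
    (hv : -2 ≤ mukaiSq n r d a) (h : memD n r d a r₁ d₁ a₁) :
    0 < d * r₁ - d₁ * r ∧ 0 < d * a₁ - d₁ * a := by
  have ha₁ := (h.rank_pos hn hr hd ha).2
  obtain ⟨hsq, hd₁, hd₁d, -, hslopes⟩ := h
  have hslopes' : 0 < (d * r₁ - d₁ * r) * (d * a₁ - d₁ * a) := by linarith
  refine (pos_and_pos_or_neg_and_neg_of_mul_pos hslopes').resolve_right fun ⟨hM, hA⟩ => ?_
  unfold mukaiSq at hv
  exact not_slope_lt_of_mukaiSq hn hr ha hd₁ hd₁d (by linarith) (le_mul_of_mukaiSq_eq hsq) ha₁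
    (by linarith) (by linarith)

theorem mukaiSq_eq_neg_two (hn : 0 < n) (hr : 0 < r) (hd : 0 < d) (ha : 0 < a)
    (hv : -2 ≤ mukaiSq n r d a) (h : memD n r d a r₁ d₁ a₁) : mukaiSq n r₁ d₁ a₁ = -2 := by
  obtain ⟨hr₁, ha₁⟩ := h.rank_pos hn hr hd ha
  obtain ⟨hM, hA⟩ := h.slope_pos hn hr hd ha hv
  refine h.1.resolve_left fun hsq => ?_
  set x := a₁ * (d * r₁ - d₁ * r)
  set y := r₁ * (d * a₁ - d₁ * a)
  have hsum : x + y ≤ d₁ := by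
    have := mukai_slope_identity n r d a r₁ d₁ a₁
    rw [hsq] at this
    nlinarith [h.mukaiPair_le_one, h.2.1]
  have hprod : d₁ ^ 2 ≤ x * y := by
    have hv₁ : r₁ * a₁ = n * d₁ ^ 2 := by unfold mukaiSq at hsq; linarith
    calc d₁ ^ 2 ≤ n * d₁ ^ 2 := le_mul_of_one_le_left (sq_nonneg d₁) hn
      _ ≤ n * d₁ ^ 2 * ((d * r₁ - d₁ * r) * (d * a₁ - d₁ * a)) :=
          le_mul_of_one_le_right (by positivity) (mul_pos hM hA)
      _ = x * y := by rw [← hv₁]; ring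
  nlinarith [sq_nonneg (x - y), mul_pos ha₁ hM, mul_pos hr₁ hA, h.2.1]

theorem rank_mul_eq (hn : 0 < n) (hr : 0 < r) (hd : 0 < d) (ha : 0 < a)
    (hv : -2 ≤ mukaiSq n r d a) (h : memD n r d a r₁ d₁ a₁) : r₁ * a₁ = n * d₁ ^ 2 + 1 := by
  have := h.mukaiSq_eq_neg_two hn hr hd ha hv
  unfold mukaiSq at this
  linarith

theorem slope_sum_le (hn : 0 < n) (hr : 0 < r) (hd : 0 < d) (ha : 0 < a)
    (hv : -2 ≤ mukaiSq n r d a) (h : memD n r d a r₁ d₁ a₁) :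
    a₁ * (d * r₁ - d₁ * r) + r₁ * (d * a₁ - d₁ * a) ≤ 2 * d - d₁ := by
  have hsq := h.mukaiSq_eq_neg_two hn hr hd ha hv
  have hP : mukaiPair n r d a r₁ d₁ a₁ ≤ -1 := by linarith [h.2.2.2.1]
  rw [mukai_slope_identity, hsq]
  nlinarith [h.2.1]

theorem rank_lt (hn : 0 < n) (hr : 2 ≤ r) (hd : 0 < d) (ha : 0 < a)
    (hv : -2 ≤ mukaiSq n r d a) (h : memD n r d a r₁ d₁ a₁) : r₁ < r := by
  have hr₀ : 0 < r := by omega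
  obtain ⟨hr₁, ha₁⟩ := h.rank_pos hn hr₀ hd ha
  obtain ⟨hM, hA⟩ := h.slope_pos hn hr₀ hd ha hv
  have hsum := h.slope_sum_le hn hr₀ hd ha hv
  have hv₁ := h.rank_mul_eq hn hr₀ hd ha hv
  obtain ⟨-, hd₁, hd₁d, -, -⟩ := h
  by_contra! hrr₁
  have hy : r ≤ r₁ * (d * a₁ - d₁ * a) := hrr₁.trans (le_mul_of_one_le_right hr₁.le hA)
  rcases hd₁d.lt_or_eq with hlt | rfl
  · have hx : (n * d₁ ^ 2 + 1) * (d - d₁) ≤ a₁ * (d * r₁ - d₁ * r) := by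
      rw [← hv₁]
      nlinarith [mul_le_mul_of_nonneg_left hrr₁ hd₁.le]
    have hnd₁ : d₁ ^ 2 ≤ n * d₁ ^ 2 := le_mul_of_one_le_left (sq_nonneg d₁) hn
    nlinarith [mul_le_mul_of_nonneg_right hnd₁ (sub_nonneg.2 hd₁d),
      mul_nonneg (mul_nonneg hd₁.le (by omega : (0 : ℤ) ≤ d₁ - 1)) (by omega : (0 : ℤ) ≤ d - d₁ - 1)]
  · -- for `d₁ = d` the slope gap `d₁ (r₁ − r)` is a positive multiple of `d₁`
    have hx : d₁ ≤ a₁ * (d₁ * r₁ - d₁ * r) := by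
      have : d₁ * 1 ≤ d₁ * (r₁ - r) := mul_le_mul_of_nonneg_left (by nlinarith) hd₁.le
      nlinarith
    linarith

theorem degree_mul_le_slope_sub_two (hn : 0 < n) (hr : 0 < r) (hd : 0 < d) (ha : 0 < a)
    (hv : -2 ≤ mukaiSq n r d a) (h : memD n r d a r₁ d₁ a₁) :
    d₁ * ((d * r₁ - d₁ * r) * n * d₁ - 2 * r) ≤ (d * r₁ - d₁ * r) - 2 := by
  obtain ⟨hr₁, ha₁⟩ := h.rank_pos hn hr hd ha
  have hA := (h.slope_pos hn hr hd ha hv).2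
  have hsum := h.slope_sum_le hn hr hd ha hv
  have hv₁ := h.rank_mul_eq hn hr hd ha hv
  have hx : a₁ * (d * r₁ - d₁ * r) ≤ 2 * d - d₁ - r₁ := by
    nlinarith [le_mul_of_one_le_right hr₁.le hA]
  have hrx : (n * d₁ ^ 2 + 1) * (d * r₁ - d₁ * r) ≤ r₁ * (2 * d - d₁ - r₁) := by
    rw [← hv₁, mul_assoc]
    exact mul_le_mul_of_nonneg_left hx hr₁.le
  nlinarith [mul_pos hr₁ h.2.1]

end memD

end

theorem n_mul_lt_of_mul_le {n r d₁ m : ℤ} (hr : 0 < r) (hd₁ : 0 < d₁) (hm : 0 < m)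
    (h : d₁ * (m * n * d₁ - 2 * r) ≤ m - 2) : n * d₁ < 2 * r := by
  by_contra! hle
  have hX : 2 * r * (m - 1) ≤ m * n * d₁ - 2 * r := by
    nlinarith [mul_le_mul_of_nonneg_left hle hm.le]
  have : m * n * d₁ - 2 * r ≤ d₁ * (m * n * d₁ - 2 * r) :=
    le_mul_of_one_le_left (by nlinarith) hd₁
  nlinarith

theorem lt_div_add_one_div_sqrt {n r x m : ℝ} (hn : 1 ≤ n) (hx : 1 ≤ x) (hm : 0 < m)
    (h : x * (m * n * x - 2 * r) < m) : x < 2 * r / (m * n) + 1 / √n := by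
  have hs : 1 ≤ √n := Real.one_le_sqrt.2 hn
  have hmn : 0 < m * n := by positivity
  by_contra! hle
  have : m * √n ≤ m * n * x - 2 * r := by
    have := mul_le_mul_of_nonneg_left hle hmn.le
    rw [mul_add, mul_div_cancel₀ _ hmn.ne', mul_one_div, mul_div_assoc, Real.div_sqrt] at this
    linarith
  nlinarith [mul_le_mul_of_nonneg_left this (by linarith : 0 ≤ x),
    mul_le_mul hx hs zero_le_one (by linarith)]

/-- bounds on elements of `D_v` when `r ≥ 2`, `d, a > 0`,
`v² ≥ −2`: with `m = dr₁ − d₁r` (a positive integer), one has `r₁ < r`,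
`nd₁ < 2r`, and, as real numbers, `d₁ < 2r/(mn) + 1/√n`. -/
theorem mem_D_bounds (n r d a r₁ d₁ a₁ : ℤ) (hn : 0 < n) (hr : 2 ≤ r)
    (hd : 0 < d) (ha : 0 < a) (hv : -2 ≤ mukaiSq n r d a)
    (h : memD n r d a r₁ d₁ a₁) :
    0 < d * r₁ - d₁ * r ∧ r₁ < r ∧ n * d₁ < 2 * r ∧
      (d₁ : ℝ) < 2 * (r : ℝ) / (((d * r₁ - d₁ * r : ℤ) : ℝ) * (n : ℝ)) +
        1 / Real.sqrt (n : ℝ) := by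
  have hr₀ : 0 < r := by omega
  have hM := (h.slope_pos hn hr₀ hd ha hv).1
  have hd₁ := h.2.1
  have hmain := h.degree_mul_le_slope_sub_two hn hr₀ hd ha hv
  refine ⟨hM, h.rank_lt hn hr hd ha hv, n_mul_lt_of_mul_le hr₀ hd₁ hM hmain, ?_⟩
  have hmain' : d₁ * ((d * r₁ - d₁ * r) * n * d₁ - 2 * r) < d * r₁ - d₁ * r := by omega
  exact lt_div_add_one_div_sqrt (by exact_mod_cast hn) (by exact_mod_cast hd₁)
    (by exact_mod_cast hM) (by exact_mod_cast hmain')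
end

section
/- Let n be a positive integer and let v = (r, d, a) be an integer triple with r ≥ 2, d > 0, a > 0 and v² = 2nd² − 2ra ≥ −2. If v₁ = (r₁, d₁, a₁) ∈ D_v^{BN} and m = dr₁ − d₁r, then mnd₁ < 2r. -/
/-!
Multiplying the pairing condition `⟨v, v₁⟩ ≤ v₁² + 1` by `d₁` and eliminating `n d₁²` with the
help of `v₁²` turns it into `a₁ m + r₁ A ≤ d₁ + (d₁ - d) v₁²`, where `m = d r₁ - d₁ r` and
`A = d a₁ - d₁ a` satisfy `0 < m ≤ A`. If `v₁² = 0` this forces `r₁, a₁ < d₁`, contradicting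
`r₁ a₁ = n d₁²`. If `v₁² = -2`, multiplying by `r₁` and substituting `r₁ a₁ = n d₁² + 1` gives
`m n d₁ ≤ 2r - r₁`.
-/

section MukaiDBN

variable {n r d a r₁ d₁ a₁ : ℤ}

theorem mul_mukaiPair_eq :
    d₁ * mukaiPair n r d a r₁ d₁ a₁ =
      d * mukaiSq n r₁ d₁ a₁ + a₁ * (d * r₁ - d₁ * r) + r₁ * (d * a₁ - d₁ * a) := by
  unfold mukaiPair mukaiSq
  ring

theorem memD.add_le (h : memD n r d a r₁ d₁ a₁) :
    a₁ * (d * r₁ - d₁ * r) + r₁ * (d * a₁ - d₁ * a) ≤ d₁ + (d₁ - d) * mukaiSq n r₁ d₁ a₁ := by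
  obtain ⟨-, hd₁, -, hpair, -⟩ := h
  have hle : d₁ * mukaiPair n r d a r₁ d₁ a₁ ≤ d₁ * (mukaiSq n r₁ d₁ a₁ + 1) :=
    mul_le_mul_of_nonneg_left (by omega) hd₁.le
  rw [mul_mukaiPair_eq] at hle
  linarith

theorem memDBN.rank_pos (hr : 0 ≤ r) (hd : 0 < d) (h : memDBN n r d a r₁ d₁ a₁) : 0 < r₁ := by
  obtain ⟨⟨-, hd₁, -⟩, hm, -⟩ := h
  by_contra! hr₁
  nlinarith

theorem memDBN.mukaiSq_ne_zero (hn : 0 < n) (hr : 0 ≤ r) (hd : 0 < d)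
    (h : memDBN n r d a r₁ d₁ a₁) : mukaiSq n r₁ d₁ a₁ ≠ 0 := by
  intro hsq
  have hr₁ := h.rank_pos hr hd
  have hkey := h.1.add_le
  obtain ⟨⟨-, hd₁, -⟩, hm, hmA⟩ := h
  rw [hsq, mul_zero, add_zero] at hkey
  have hiso : r₁ * a₁ = n * d₁ ^ 2 := by unfold mukaiSq at hsq; linarith
  have ha₁ : 0 < a₁ := pos_of_mul_pos_right (hiso ▸ by positivity) hr₁.le
  have hr₁_lt : r₁ < d₁ := by nlinarith
  have ha₁_lt : a₁ < d₁ := by nlinarith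
  have hlt : r₁ * a₁ < d₁ ^ 2 := sq d₁ ▸ mul_lt_mul'' hr₁_lt ha₁_lt hr₁.le ha₁.le
  have hle : d₁ ^ 2 ≤ n * d₁ ^ 2 := le_mul_of_one_le_left (sq_nonneg d₁) hn
  omega

theorem memDBN.mul_mul_le_of_mukaiSq_eq_neg_two (hr : 0 ≤ r) (hd : 0 < d)
    (h : memDBN n r d a r₁ d₁ a₁) (hsq : mukaiSq n r₁ d₁ a₁ = -2) :
    (d * r₁ - d₁ * r) * n * d₁ ≤ 2 * r - r₁ := by
  have hr₁ := h.rank_pos hr hd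
  have hkey := h.1.add_le
  obtain ⟨⟨-, hd₁, -⟩, hm, hmA⟩ := h
  rw [hsq] at hkey
  have hsph : r₁ * a₁ = n * d₁ ^ 2 + 1 := by unfold mukaiSq at hsq; linarith
  have hA : d * r₁ - d₁ * r ≤ r₁ ^ 2 * (d * a₁ - d₁ * a) := calc
    d * r₁ - d₁ * r ≤ 1 * (d * a₁ - d₁ * a) := by rw [one_mul]; exact hmA
    _ ≤ r₁ ^ 2 * (d * a₁ - d₁ * a) :=
      mul_le_mul_of_nonneg_right (one_le_pow₀ (by omega)) (by omega)
  have hmul := mul_le_mul_of_nonneg_left hkey hr₁.le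
  have : d₁ * ((d * r₁ - d₁ * r) * n * d₁) ≤ d₁ * (2 * r - r₁) := by
    linear_combination hmul - (d * r₁ - d₁ * r) * hsph + hA
  exact le_of_mul_le_mul_left this hd₁

end MukaiDBN

theorem mem_DBN_bound_general (n r d a r₁ d₁ a₁ : ℤ) (hn : 0 < n) (hr : 2 ≤ r)
    (hd : 0 < d)
    (h : memDBN n r d a r₁ d₁ a₁) :
    (d * r₁ - d₁ * r) * n * d₁ < 2 * r := by
  have hr₀ : 0 ≤ r := by omega
  rcases h.1.1 with hsq | hsq
  · exact absurd hsq (h.mukaiSq_ne_zero hn hr₀ hd)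
  · linarith [h.mul_mul_le_of_mukaiSq_eq_neg_two hr₀ hd hsq, h.rank_pos hr₀ hd]

/-- if `v₁ ∈ D_v^{BN}` and `m = dr₁ − d₁r`, then `mnd₁ < 2r`. -/
theorem mem_DBN_bound (n r d a r₁ d₁ a₁ : ℤ) (hn : 0 < n) (hr : 2 ≤ r)
    (hd : 0 < d) (ha : 0 < a) (hv : -2 ≤ mukaiSq n r d a)
    (h : memDBN n r d a r₁ d₁ a₁) :
    (d * r₁ - d₁ * r) * n * d₁ < 2 * r :=
  mem_DBN_bound_general n r d a r₁ d₁ a₁ hn hr hd h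
end

section
/- Let n, r, d be positive integers with r ≥ 2 and d ≥ r·⌊r/n⌋ + 2, and set a = ⌊(nd² + 1)/r⌋. Then D_{(r,d,a)}^{BN} = ∅. -/
/-!
Put `u = d r₁ − d₁ r > 0`. Clearing the denominator `r r₁` turns the slope condition
`u ≤ d a₁ − d₁ a` into `2u(r r₁ + n d d₁) ≤ d₁ r₁ v² − d r v₁²`, and the pairing condition
`⟨v, v₁⟩ ≤ v₁² + 1` into a bound on `r₁² v² + r² v₁² − 2n u²`. Eliminating `v²` between the two
gives an inequality that is impossible for `v₁² = 0` and reads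
`u (n d₁² + r₁² − 1) + r₁ d₁ ≤ 2 r d₁` for `v₁² = −2`. Since `a = ⌊(nd² + 1)/r⌋`, we have
`v² = 2((nd² + 1) mod r − 1) ≤ 2(r − 2)`. Now `d r₁ = u + r d₁` and `d ≥ r⌊r/n⌋ + 2`: for
`r₁ = 1` the slope inequality becomes `n u d ≤ r² + r − 2` while `n u d ≥ r(r + 1)`, and
`r₁ ≥ 2` forces `u = 1`, `d₁ = 2⌊r/n⌋ + 1`, `r₁ = 2`, which the slope inequality excludes too.
-/

theorem two_mul_mul_mukaiPair_eq (n r d a r₁ d₁ a₁ : ℤ) :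
    2 * r * r₁ * mukaiPair n r d a r₁ d₁ a₁ =
      r₁ ^ 2 * mukaiSq n r d a + r ^ 2 * mukaiSq n r₁ d₁ a₁ -
        2 * n * (d * r₁ - d₁ * r) ^ 2 := by
  unfold mukaiPair mukaiSq
  ring

theorem two_mul_mul_slope_sub_eq (n r d a r₁ d₁ a₁ : ℤ) :
    2 * r * r₁ * (d * a₁ - d₁ * a) =
      d₁ * r₁ * mukaiSq n r d a - d * r * mukaiSq n r₁ d₁ a₁ -
        2 * n * d * d₁ * (d * r₁ - d₁ * r) := by
  unfold mukaiSq
  ring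

theorem mukaiSq_ediv (n r d : ℤ) :
    mukaiSq n r d ((n * d ^ 2 + 1) / r) = 2 * ((n * d ^ 2 + 1) % r - 1) := by
  unfold mukaiSq
  linear_combination (-2) * Int.mul_ediv_add_emod (n * d ^ 2 + 1) r

section MukaiInequalities

variable {n r d a r₁ d₁ a₁ : ℤ}

theorem two_mul_mul_le_of_slope_le (hrr₁ : 0 ≤ r * r₁)
    (hslope : d * r₁ - d₁ * r ≤ d * a₁ - d₁ * a) :
    2 * (d * r₁ - d₁ * r) * (r * r₁ + n * d * d₁) ≤
      d₁ * r₁ * mukaiSq n r d a - d * r * mukaiSq n r₁ d₁ a₁ := by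
  have h := mul_le_mul_of_nonneg_left hslope (mul_nonneg zero_le_two hrr₁)
  linear_combination h + two_mul_mul_slope_sub_eq n r d a r₁ d₁ a₁

theorem mul_le_of_slope_le_of_mukaiPair_le (hr : 0 < r) (hr₁ : 0 ≤ r₁) (hd₁ : 0 ≤ d₁)
    (hslope : d * r₁ - d₁ * r ≤ d * a₁ - d₁ * a)
    (hpair : mukaiPair n r d a r₁ d₁ a₁ ≤ mukaiSq n r₁ d₁ a₁ + 1) :
    (d * r₁ - d₁ * r) * (2 * n * d₁ ^ 2 + 2 * r₁ ^ 2 + mukaiSq n r₁ d₁ a₁) ≤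
      2 * r₁ * d₁ * (mukaiSq n r₁ d₁ a₁ + 1) - 2 * r * d₁ * mukaiSq n r₁ d₁ a₁ := by
  have h₁ := mul_le_mul_of_nonneg_left
    (two_mul_mul_le_of_slope_le (n := n) (mul_nonneg hr.le hr₁) hslope) hr₁
  have h₂ := mul_le_mul_of_nonneg_left hpair
    (mul_nonneg (mul_nonneg (mul_nonneg zero_le_two hr.le) hr₁) hd₁)
  refine le_of_mul_le_mul_left ?_ hr
  linear_combination h₁ + h₂ - d₁ * two_mul_mul_mukaiPair_eq n r d a r₁ d₁ a₁

end MukaiInequalities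

section Arithmetic

variable {n r f d d₁ r₁ u : ℤ}

theorem mul_succ_le_mul_mul (hr : 0 < r) (hf0 : 0 ≤ f) (hf : r < n * (f + 1)) (hu : 0 < u)
    (hd₁ : 0 < d₁) (hdb : r * f + 2 ≤ u + r * d₁) : r * (r + 1) ≤ n * u * (u + r * d₁) := by
  have hn : 0 < n := pos_of_mul_pos_left (hr.trans hf) (by omega)
  have hnd : 0 ≤ n * (u + r * d₁) := mul_nonneg hn.le (by nlinarith)
  rcases lt_or_ge f d₁ with hfd | hdf
  · have h : r * (r + 1) ≤ r * (n * d₁) :=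
      mul_le_mul_of_nonneg_left (by nlinarith) hr.le
    calc r * (r + 1) ≤ n * (u + r * d₁) := by nlinarith
      _ ≤ u * (n * (u + r * d₁)) := le_mul_of_one_le_left hnd hu
      _ = n * u * (u + r * d₁) := by ring
  · have hu2 : 2 ≤ u := by nlinarith
    have h2nf : r + 1 ≤ 2 * (n * f) := by nlinarith
    calc r * (r + 1) ≤ 2 * n * (r * f) := by nlinarith
      _ ≤ 2 * (n * (u + r * d₁)) := by nlinarith
      _ ≤ u * (n * (u + r * d₁)) := mul_le_mul_of_nonneg_right hu2 hnd
      _ = n * u * (u + r * d₁) := by ring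

theorem eq_one_and_eq_of_mul_le (hr : 2 ≤ r) (hu : 0 < u) (hd₁ : 0 < d₁)
    (hud : u * d₁ ≤ 2 * f + 1) (h : 2 * (r * f + 2) ≤ u + r * d₁) :
    u = 1 ∧ d₁ = 2 * f + 1 := by
  rcases lt_or_ge u 2 with hu1 | hu2
  · obtain rfl : u = 1 := by omega
    exact ⟨rfl, by nlinarith⟩
  · have hd₁f : d₁ ≤ f := by nlinarith
    nlinarith

theorem false_of_d₁_eq_two_mul_add_one (hr : 2 ≤ r) (hf0 : 0 ≤ f) (hf : r < n * (f + 1))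
    (hdb : r * f + 2 ≤ d) (hr₁ : 2 ≤ r₁) (hd₁ : d₁ = 2 * f + 1) (hD : d * r₁ = 1 + r * d₁)
    (hslope : r * r₁ + n * d * d₁ ≤ (r - 2) * d₁ * r₁ + d * r)
    (hsum : n * d₁ + r₁ ≤ 2 * r) : False := by
  subst hd₁
  rcases eq_or_lt_of_le hf0 with rfl | hf1
  · nlinarith
  have hrf : r ≤ r * f := le_mul_of_one_le_right (by omega) hf1
  obtain rfl : r₁ = 2 := by
    by_contra hne
    have h₁ : (r * f + 2) * r₁ ≤ d * r₁ := mul_le_mul_of_nonneg_right hdb (by omega)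
    have h₂ : (r * f + 2) * 3 ≤ (r * f + 2) * r₁ :=
      mul_le_mul_of_nonneg_left (by omega) (by omega)
    linarith
  have hm : n * (2 * f + 1) ≤ r + 3 := by
    by_contra! hm
    have h₁ : 2 * (n * d * (2 * f + 1)) = n * (2 * f + 1) * (1 + r * (2 * f + 1)) := by
      rw [← hD]; ring
    have h₂ : r * (2 * f + 1) * (r + 4) ≤ r * (2 * f + 1) * (n * (2 * f + 1)) :=
      mul_le_mul_of_nonneg_left (by omega) (by nlinarith)
    nlinarith
  have hnf : n ≤ n * f := le_mul_of_one_le_right (by nlinarith) hf1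
  linarith

theorem false_of_slope_le_of_mul_le (hr : 2 ≤ r) (hf0 : 0 ≤ f) (hf : r < n * (f + 1))
    (hdb : r * f + 2 ≤ d) (hu : 0 < u) (hd₁ : 0 < d₁) (hD : d * r₁ = u + r * d₁)
    (hslope : u * (r * r₁ + n * d * d₁) ≤ (r - 2) * d₁ * r₁ + d * r)
    (hpair : u * (n * d₁ ^ 2 + r₁ ^ 2 - 1) + r₁ * d₁ ≤ 2 * r * d₁) : False := by
  have hn : 0 < n := pos_of_mul_pos_left (by omega : 0 < n * (f + 1)) (by omega)
  have hd : 0 < d := by nlinarith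
  have hr₁ : 0 < r₁ := pos_of_mul_pos_right (by nlinarith) hd.le
  have hnud : n * u * d₁ + r₁ ≤ 2 * r := by
    refine le_of_mul_le_mul_left ?_ hd₁
    nlinarith [mul_nonneg hu.le (by nlinarith : (0 : ℤ) ≤ r₁ ^ 2 - 1)]
  rcases (show r₁ = 1 ∨ 2 ≤ r₁ by omega) with rfl | hr₁2
  · obtain rfl : d = u + r * d₁ := by linarith
    have h :=
      mul_le_mul_of_nonneg_left (mul_succ_le_mul_mul (by omega) hf0 hf hu hd₁ hdb) hd₁.le
    nlinarith
  · have hud : u * d₁ ≤ 2 * f + 1 := by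
      have h : n * (u * d₁) < n * (2 * f + 2) := by nlinarith
      have := lt_of_mul_lt_mul_left h hn.le
      omega
    have h2d : 2 * (r * f + 2) ≤ u + r * d₁ := by nlinarith
    obtain ⟨rfl, hd₁f⟩ := eq_one_and_eq_of_mul_le hr hu hd₁ hud h2d
    exact false_of_d₁_eq_two_mul_add_one hr hf0 hf hdb hr₁2 hd₁f hD (by linarith) (by linarith)

end Arithmetic

theorem DBN_empty_of_d_large_general (n r d : ℤ) (hn : 0 < n) (hr : 2 ≤ r)
    (hdb : r * (r / n) + 2 ≤ d) :
    ∀ r₁ d₁ a₁ : ℤ, ¬ memDBN n r d ((n * d ^ 2 + 1) / r) r₁ d₁ a₁ := by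
  rintro r₁ d₁ a₁ ⟨⟨hsq₁, hd₁, -, hpair, -⟩, hu, hslope⟩
  have hf0 : 0 ≤ r / n := Int.ediv_nonneg (by omega) hn.le
  have hf : r < n * (r / n + 1) := by linarith [Int.lt_mul_ediv_self_add (x := r) hn]
  have hd : 0 < d := by nlinarith
  have hr₁ : 0 < r₁ := pos_of_mul_pos_right (by nlinarith) hd.le
  have hsq : mukaiSq n r d ((n * d ^ 2 + 1) / r) ≤ 2 * (r - 2) := by
    rw [mukaiSq_ediv]
    linarith [Int.emod_lt_of_pos (n * d ^ 2 + 1) (by omega : 0 < r)]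
  have hslope' := two_mul_mul_le_of_slope_le (n := n) (by positivity) hslope
  have helim :=
    mul_le_of_slope_le_of_mukaiPair_le (n := n) (by omega) hr₁.le hd₁.le hslope (by omega)
  have hsq' := mul_le_mul_of_nonneg_left hsq (mul_nonneg hd₁.le hr₁.le)
  rcases hsq₁ with h | h <;> rw [h] at hslope' helim
  · have h₀ : 2 * n * d₁ ^ 2 + 2 * r₁ ^ 2 ≤ 2 * r₁ * d₁ := by
      refine le_trans (le_mul_of_one_le_left (by positivity) hu) ?_
      linarith
    nlinarith [sq_nonneg (d₁ - r₁), mul_le_mul_of_nonneg_right hn (sq_nonneg d₁)]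
  · exact false_of_slope_le_of_mul_le (r₁ := r₁) hr hf0 hf hdb hu hd₁ (by ring)
      (by linarith) (by linarith)

/-- if `r ≥ 2`, `d ≥ r⌊r/n⌋ + 2` and `a = ⌊(nd² + 1)/r⌋`, then
`D_{(r,d,a)}^{BN} = ∅`. -/
theorem DBN_empty_of_d_large (n r d : ℤ) (hn : 0 < n) (hr : 2 ≤ r) (hd : 0 < d)
    (hdb : r * (r / n) + 2 ≤ d) :
    ∀ r₁ d₁ a₁ : ℤ, ¬ memDBN n r d ((n * d ^ 2 + 1) / r) r₁ d₁ a₁ :=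
  DBN_empty_of_d_large_general n r d hn hr hdb
end

section
/- Let n be a positive integer, r ≥ 2 an integer, and m, d₁ positive integers. Set d = m + rd₁, a₁ = nd₁² + 1, and a = ⌊(nd² + 1)/r⌋. If m ≤ da₁ − ad₁, then nmd₁ ≤ r. -/
/-!
With `x = n * d ^ 2 + 1`, the floor satisfies `r * ⌊x / r⌋ > x - r`. Multiplying the hypothesis
by `r` and using `d - r * d₁ = m` then turns it into `n * m * d₁ * d < (r + 1) * d`, and `d > 0`
can be cancelled.
-/

theorem mul_cross_term_le {n r d d₁ : ℤ} (hr : 0 < r) (hd₁ : 0 ≤ d₁) :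
    r * (d * (n * d₁ ^ 2 + 1) - (n * d ^ 2 + 1) / r * d₁) ≤
      n * d * d₁ * (r * d₁ - d) + r * d + (r - 2) * d₁ := by
  have hfloor : n * d ^ 2 + 2 - r ≤ r * ((n * d ^ 2 + 1) / r) := by
    linarith [Int.lt_mul_ediv_self_add (x := n * d ^ 2 + 1) hr]
  nlinarith [mul_le_mul_of_nonneg_right hfloor hd₁]

theorem rank_one_estimate_general (n r m d₁ : ℤ) (hr : 2 ≤ r)
    (hm : 0 < m) (hd₁ : 0 < d₁)
    (h : m ≤ (m + r * d₁) * (n * d₁ ^ 2 + 1) -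
        ((n * (m + r * d₁) ^ 2 + 1) / r) * d₁) :
    n * m * d₁ ≤ r := by
  have hr₀ : 0 < r := by omega
  have hd : 0 < m + r * d₁ := by positivity
  have hcross := mul_cross_term_le (n := n) (d := m + r * d₁) hr₀ hd₁.le
  have hmul : n * m * d₁ * (m + r * d₁) < (r + 1) * (m + r * d₁) := by
    nlinarith [mul_le_mul_of_nonneg_left h hr₀.le]
  exact Int.lt_add_one_iff.mp (lt_of_mul_lt_mul_right hmul hd.le)

/-- key numerical estimate. With `d = m + rd₁`, `a₁ = nd₁² + 1`,
`a = ⌊(nd² + 1)/r⌋`: if `m ≤ da₁ − ad₁`, then `nmd₁ ≤ r`. -/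
theorem rank_one_estimate (n r m d₁ : ℤ) (hn : 0 < n) (hr : 2 ≤ r)
    (hm : 0 < m) (hd₁ : 0 < d₁)
    (h : m ≤ (m + r * d₁) * (n * d₁ ^ 2 + 1) -
        ((n * (m + r * d₁) ^ 2 + 1) / r) * d₁) :
    n * m * d₁ ≤ r :=
  rank_one_estimate_general n r m d₁ hr hm hd₁ h
end

section
/- Let n be a positive integer and let v = (r, d, a) be an integer triple with r ≥ 2, d > 0, a ≥ 2, v² = 2nd² − 2ra ≥ −2, and d ≥ r·⌊2r/n⌋ + r. If n = 1, assume in addition that 2d ≥ 2a + r. Then D_v = ∅. -/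
/-!
Put `x = r a₁`, `y = r₁ a` and `M = n d d₁`. For `v₁ ∈ D_v` one has `r₁ a₁ = n d₁² + ε` with
`ε ∈ {0, 1}` and `x + y ≥ 2M − 1 + 2ε`, which forces `r₁, a₁ > 0`; the last condition says that
`r₁/d₁` and `a₁/d₁` lie on the same side of `r/d` and `a/d` respectively.

If both are smaller, `v² ≥ −2` gives `y ≤ M`, while `n d₁ (x d + r) ≤ n d₁ · r a d₁ ≤ x y`
gives `y > M`. If both are larger and `ε = 0`, then `x (r a d₁ + a) ≤ x y d = r a d₁ M` gives
`x < M`, and symmetrically `y < M`. If both are larger and `ε = 1`, eliminating `y` gives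
`x d₁ ≥ d (n d₁² − 1) + d₁ + r₁`; multiplying by `r₁` yields `n d₁ < 2r`, so `d₁ ≤ ⌊2r/n⌋`,
while `r₁ ≥ 1` yields `d (n d₁² − 1) < r d₁ (n d₁² + 1)`. Together these contradict
`d ≥ r (⌊2r/n⌋ + 1)` unless `n d₁² = 1`, the one case where `2d ≥ 2a + r` is needed.
-/

namespace Mukai

variable {n r d a r₁ d₁ a₁ : ℤ}

lemma pos_of_mul_pos_of_add_pos (hr : 0 < r) (ha : 0 < a) (hprod : 0 < r₁ * a₁)
    (hsum : 0 < r * a₁ + r₁ * a) : 0 < r₁ ∧ 0 < a₁ := by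
  rcases mul_pos_iff.mp hprod with hpos | ⟨hr₁, ha₁⟩
  · exact hpos
  · nlinarith

lemma mul_le_of_slope_lt (hd : 0 < d) (ha : 0 < a) (hd₁ : 0 ≤ d₁) (hd₁d : d₁ ≤ d)
    (hv : r * a ≤ n * d ^ 2 + 1) (hslope : r₁ * d < r * d₁) : r₁ * a ≤ n * d * d₁ := by
  have hlt : r₁ * a * d < (n * d * d₁ + 1) * d :=
    calc r₁ * a * d < r * a * d₁ := by linarith [mul_lt_mul_of_pos_right hslope ha]
      _ ≤ (n * d ^ 2 + 1) * d₁ := mul_le_mul_of_nonneg_right hv hd₁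
      _ ≤ (n * d * d₁ + 1) * d := by linarith
  linarith [lt_of_mul_lt_mul_right hlt hd.le]

lemma false_of_slope_lt (hn : 0 < n) (hr : 0 < r) (ha : 0 < a) (hd₁ : 0 < d₁) (ha₁ : 0 < a₁)
    (hsq : n * d₁ ^ 2 ≤ r₁ * a₁) (hslope : a₁ * d < a * d₁) (hy : r₁ * a ≤ n * d * d₁) :
    False := by
  have hstep : r * a₁ * d + r ≤ r * a * d₁ := by
    linarith [mul_le_mul_of_nonneg_left (Int.add_one_le_iff.mpr hslope) hr.le]
  have hxy : r * a₁ * (n * d * d₁) + r * n * d₁ ≤ r * a₁ * (r₁ * a) :=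
    calc _ = (r * a₁ * d + r) * (n * d₁) := by ring
      _ ≤ r * a * d₁ * (n * d₁) := mul_le_mul_of_nonneg_right hstep (by positivity)
      _ = r * a * (n * d₁ ^ 2) := by ring
      _ ≤ r * a * (r₁ * a₁) := mul_le_mul_of_nonneg_left hsq (by positivity)
      _ = _ := by ring
  have hx : r * a₁ * (r₁ * a) ≤ r * a₁ * (n * d * d₁) :=
    mul_le_mul_of_nonneg_left hy (by positivity)
  linarith [show 0 < r * n * d₁ by positivity]

lemma mul_lt_of_slope_gt (hn : 0 < n) (hd : 0 < d) (hd₁ : 0 < d₁) (hr : 0 < r) (ha : 0 < a)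
    (ha₁ : 0 < a₁) (hsq : r₁ * a₁ = n * d₁ ^ 2) (hslope : r * d₁ < r₁ * d) :
    r * a₁ < n * d * d₁ := by
  have hstep : r * a * d₁ + a ≤ r₁ * a * d := by
    linarith [mul_le_mul_of_nonneg_left (Int.add_one_le_iff.mpr hslope) ha.le]
  have hx : r * a₁ * (r * a * d₁ + a) ≤ r * a * d₁ * (n * d * d₁) :=
    calc _ ≤ r * a₁ * (r₁ * a * d) := mul_le_mul_of_nonneg_left hstep (by positivity)
      _ = _ := by linear_combination (r * a * d) * hsq
  by_contra! hle
  have := mul_le_mul_of_nonneg_right hle (show 0 ≤ r * a * d₁ + a by positivity)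
  linarith [show 0 < n * d * d₁ * a by positivity]

lemma le_mul_of_slope_gt (hd₁ : 0 < d₁) (hr₁ : 0 < r₁) (hsq : r₁ * a₁ = n * d₁ ^ 2 + 1)
    (hsum : 2 * n * d * d₁ + 1 ≤ r * a₁ + r₁ * a) (hslope : a * d₁ < a₁ * d) :
    d * (n * d₁ ^ 2 - 1) + d₁ + r₁ ≤ r * a₁ * d₁ := by
  have hy : r₁ * (a * d₁ + 1) ≤ r₁ * (a₁ * d) := mul_le_mul_of_nonneg_left hslope hr₁.le
  have hx : d₁ * (2 * n * d * d₁ + 1 - r * a₁) ≤ d₁ * (r₁ * a) :=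
    mul_le_mul_of_nonneg_left (by linarith) hd₁.le
  have hprod : r₁ * (a₁ * d) = (n * d₁ ^ 2 + 1) * d := by rw [← mul_assoc, hsq]
  linarith

lemma mul_lt_two_mul_of_slope_gt (hn : 0 < n) (hd₁ : 0 < d₁) (hr₁ : 0 < r₁)
    (hsq : r₁ * a₁ = n * d₁ ^ 2 + 1) (hslope : r * d₁ < r₁ * d)
    (hbound : d * (n * d₁ ^ 2 - 1) + d₁ + r₁ ≤ r * a₁ * d₁) : n * d₁ < 2 * r := by
  have hK : 0 ≤ n * d₁ ^ 2 - 1 := by linarith [show 0 < n * d₁ ^ 2 by positivity]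
  have h1 : r₁ * (d * (n * d₁ ^ 2 - 1) + d₁ + r₁) ≤ r * d₁ * (n * d₁ ^ 2 + 1) := by
    rw [← hsq]
    linarith [mul_le_mul_of_nonneg_left hbound hr₁.le]
  have h2 : (r * d₁ + 1) * (n * d₁ ^ 2 - 1) ≤ r₁ * d * (n * d₁ ^ 2 - 1) :=
    mul_le_mul_of_nonneg_right hslope hK
  have h3 : d₁ * (n * d₁ + 1) ≤ d₁ * (2 * r) := by nlinarith
  linarith [le_of_mul_le_mul_left h3 hd₁]

lemma mul_sq_sub_one_lt (hr : 0 < r) (hd₁ : 0 < d₁) (hr₁ : 0 < r₁) (ha₁ : 0 < a₁)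
    (hsq : r₁ * a₁ = n * d₁ ^ 2 + 1)
    (hbound : d * (n * d₁ ^ 2 - 1) + d₁ + r₁ ≤ r * a₁ * d₁) :
    d * (n * d₁ ^ 2 - 1) < r * d₁ * (n * d₁ ^ 2 + 1) := by
  have : r * a₁ * d₁ * 1 ≤ r * a₁ * d₁ * r₁ :=
    mul_le_mul_of_nonneg_left hr₁ (by positivity)
  have hprod : r * a₁ * d₁ * r₁ = r * d₁ * (n * d₁ ^ 2 + 1) := by
    rw [← hsq]; ring
  linarith

lemma mul_sq_add_one_le_ediv (hn : 0 < n) (hd₁ : 0 < d₁) (hlt : n * d₁ < 2 * r)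
    (h2 : 2 ≤ n * d₁ ^ 2) :
    d₁ * (n * d₁ ^ 2 + 1) ≤ (2 * r / n + 1) * (n * d₁ ^ 2 - 1) := by
  have hF : 2 * r < (2 * r / n + 1) * n := Int.lt_ediv_add_one_mul_self _ hn
  have hd₁F : d₁ ≤ 2 * r / n := Int.le_ediv_of_mul_le hn (by linarith)
  generalize 2 * r / n = F at hF hd₁F ⊢
  have hgap : 2 ≤ n * (F + 1 - d₁) := by linarith
  suffices 2 * d₁ ≤ (F + 1 - d₁) * (n * d₁ ^ 2 - 1) by linarith
  rcases (show d₁ = 1 ∨ 2 ≤ d₁ by omega) with rfl | hd₁2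
  · simp only [one_pow, mul_one, add_sub_cancel_right] at h2 hlt hd₁F ⊢
    rcases (show F = 1 ∨ 2 ≤ F by omega) with rfl | hF2
    · omega
    · nlinarith
  · have hsq : n * d₁ + 1 ≤ n * d₁ ^ 2 := by nlinarith
    have : n * (2 * d₁) ≤ n * ((F + 1 - d₁) * (n * d₁ ^ 2 - 1)) := by nlinarith
    exact le_of_mul_le_mul_left this hn

lemma false_of_mul_eq_two (hr : 0 ≤ r) (hr₁ : 0 < r₁) (ha₁ : 0 < a₁) (hsq : r₁ * a₁ = 2)
    (hsum : 2 * d + 1 ≤ r * a₁ + r₁ * a) (hn1 : 2 * a + r ≤ 2 * d) (hrd : 2 * r ≤ d) :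
    False := by
  have hr₁a₁ : r₁ = 1 ∧ a₁ = 2 ∨ r₁ = 2 ∧ a₁ = 1 := by
    have : r₁ ≤ 2 := by nlinarith
    interval_cases r₁ <;> omega
  rcases hr₁a₁ with ⟨rfl, rfl⟩ | ⟨rfl, rfl⟩ <;> omega

lemma false_of_slopes_gt_of_sq_eq_neg_two (hn : 0 < n) (hr : 0 < r) (hd₁ : 0 < d₁)
    (hr₁ : 0 < r₁) (ha₁ : 0 < a₁) (hsq : r₁ * a₁ = n * d₁ ^ 2 + 1)
    (hsum : 2 * n * d * d₁ + 1 ≤ r * a₁ + r₁ * a)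
    (hrslope : r * d₁ < r₁ * d) (haslope : a * d₁ < a₁ * d)
    (hdb : r * (2 * r / n) + r ≤ d) (hn1 : n = 1 → 2 * a + r ≤ 2 * d) : False := by
  have hbound := le_mul_of_slope_gt hd₁ hr₁ hsq hsum haslope
  have hlt := mul_lt_two_mul_of_slope_gt hn hd₁ hr₁ hsq hrslope hbound
  have hd := mul_sq_sub_one_lt hr hd₁ hr₁ ha₁ hsq hbound
  have hK : 0 < n * d₁ ^ 2 := by positivity
  rcases (show n * d₁ ^ 2 = 1 ∨ 2 ≤ n * d₁ ^ 2 by omega) with hone | htwo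
  · obtain ⟨rfl, rfl⟩ : n = 1 ∧ d₁ = 1 := by
      have : n ≤ 1 := by nlinarith
      have : d₁ ≤ 1 := by nlinarith
      omega
    simp only [Int.ediv_one, one_pow, mul_one] at hdb hsq hsum
    exact false_of_mul_eq_two hr.le hr₁ ha₁ hsq hsum (hn1 rfl) (by nlinarith)
  · have hfloor := mul_sq_add_one_le_ediv hn hd₁ hlt htwo
    have : r * (2 * r / n + 1) * (n * d₁ ^ 2 - 1) ≤ d * (n * d₁ ^ 2 - 1) :=
      mul_le_mul_of_nonneg_right (by linarith) (by linarith)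
    linarith [mul_le_mul_of_nonneg_left hfloor hr.le]

end Mukai

open Mukai in
/-- if `r ≥ 2`, `d > 0`, `a ≥ 2`, `v² ≥ −2`,
`d ≥ r⌊2r/n⌋ + r`, and additionally `2d ≥ 2a + r` when `n = 1`, then
`D_v = ∅`. -/
theorem D_empty_of_d_large (n r d a : ℤ) (hn : 0 < n) (hr : 2 ≤ r)
    (hd : 0 < d) (ha : 2 ≤ a) (hv : -2 ≤ mukaiSq n r d a)
    (hdb : r * (2 * r / n) + r ≤ d)
    (hn1 : n = 1 → 2 * a + r ≤ 2 * d) :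
    ∀ r₁ d₁ a₁ : ℤ, ¬ memD n r d a r₁ d₁ a₁ := by
  rintro r₁ d₁ a₁ ⟨hsq, hd₁, hd₁d, hpair, hslope⟩
  simp only [mukaiSq, mukaiPair] at hv hsq hpair
  have hr0 : 0 < r := by omega
  have ha0 : 0 < a := by omega
  have hsq_le : n * d₁ ^ 2 ≤ r₁ * a₁ := by rcases hsq with h | h <;> linarith
  have hsum : 2 * n * d * d₁ - 1 ≤ r * a₁ + r₁ * a := by rcases hsq with h | h <;> linarith
  obtain ⟨hr₁, ha₁⟩ : 0 < r₁ ∧ 0 < a₁ := pos_of_mul_pos_of_add_pos hr0 ha0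
    (lt_of_lt_of_le (by positivity) hsq_le)
    (by linarith [show 0 < n * d * d₁ by positivity])
  rcases mul_pos_iff.mp hslope with ⟨haslope, hrslope⟩ | ⟨haslope, hrslope⟩
  · rw [sub_pos] at haslope hrslope
    rcases hsq with hsq | hsq
    · have hx := mul_lt_of_slope_gt hn hd hd₁ hr0 ha0 ha₁ (by linarith) hrslope
      have hy := mul_lt_of_slope_gt (a₁ := r₁) hn hd hd₁ ha0 hr0 hr₁ (by linarith) haslope
      linarith
    · exact false_of_slopes_gt_of_sq_eq_neg_two hn hr0 hd₁ hr₁ ha₁ (by linarith) (by linarith)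
        hrslope haslope hdb hn1
  · rw [sub_neg] at haslope hrslope
    exact false_of_slope_lt hn hr0 ha0 hd₁ ha₁ hsq_le haslope
      (mul_le_of_slope_lt hd ha0 hd₁.le hd₁d (by linarith) hrslope)
end

section
/- Let n be a positive integer, r ≥ 2 and d > 0 integers. Set a₀ = ⌊(nd² + 1)/r⌋ and f = (nd² + 1) − r·a₀ (so 0 ≤ f < r is the remainder of nd² + 1 modulo r), and let v₀ = (r, d, a₀). For any v₁ = (r₁, d₁, a₁) ∈ D_{v₀}^{BN}, setting m = r₁d − rd₁ and k = a₁d − a₀d₁, one has: (i) rr₁k = −nmdd₁ + rd − r₁d₁ + r₁d₁f; (ii) 1 ≤ ndd₁m ≤ rd − r₁d₁ + r₁d₁f − rr₁; and (iii) 1 ≤ d₁nm < r + r₁(r − 2). -/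
/-!
The Brill–Noether condition `k ≥ m > 0` rules out an isotropic `v₁`: if `r₁a₁ = nd₁²`, then
`r₁k = d₁(ndd₁ − r₁a₀)`, so `ndd₁ − r₁a₀ ≥ 1` and `r₁⟨v₀, v₁⟩ = nd₁m + r₁(ndd₁ − r₁a₀) > r₁`,
contradicting `⟨v₀, v₁⟩ ≤ 1`. Hence `r₁a₁ = nd₁² + 1`, which together with `ra₀ = nd² + 1 − f`
is identity (i); the bounds then follow from `k ≥ 1`, `f ≤ r − 1` and `d₁ ≤ d`.
-/

namespace memDBN

variable {n r d a r₁ d₁ a₁ : ℤ}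

theorem rank_pos_s11 (h : memDBN n r d a r₁ d₁ a₁) (hr : 0 < r) : 0 < r₁ := by
  obtain ⟨⟨-, hd₁, hd₁d, -, -⟩, hm, -⟩ := h
  nlinarith

theorem mukaiSq_ne_zero_s11 (h : memDBN n r d a r₁ d₁ a₁) (hn : 0 < n) (hr : 0 < r) :
    mukaiSq n r₁ d₁ a₁ ≠ 0 := by
  intro hiso
  have hr₁ := h.rank_pos_s11 hr
  obtain ⟨⟨-, hd₁, -, hpair, -⟩, hm, hkm⟩ := h
  rw [hiso] at hpair
  simp only [mukaiPair] at hpair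
  replace hiso : r₁ * a₁ = n * d₁ ^ 2 := by simp only [mukaiSq] at hiso; linarith
  have hx : 0 < n * d * d₁ - r₁ * a := by
    have hdx : d₁ * (n * d * d₁ - r₁ * a) = r₁ * (d * a₁ - d₁ * a) := by
      linear_combination (-d) * hiso
    refine pos_of_mul_pos_right ?_ hd₁.le
    rw [hdx]
    exact mul_pos hr₁ (hm.trans_le hkm)
  have hsplit : r₁ * (2 * n * d * d₁ - r * a₁ - r₁ * a) =
      n * d₁ * (d * r₁ - d₁ * r) + r₁ * (n * d * d₁ - r₁ * a) := by
    linear_combination (-r) * hiso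
  have hpair_le : r₁ * (2 * n * d * d₁ - r * a₁ - r₁ * a) ≤ r₁ * 1 :=
    mul_le_mul_of_nonneg_left (by linarith) hr₁.le
  linarith [mul_pos (mul_pos hn hd₁) hm, mul_le_mul_of_nonneg_left hx hr₁.le]

theorem rank_mul_eq (h : memDBN n r d a r₁ d₁ a₁) (hn : 0 < n) (hr : 0 < r) :
    r₁ * a₁ = n * d₁ ^ 2 + 1 := by
  have hsq := h.1.1.resolve_left (h.mukaiSq_ne_zero_s11 hn hr)
  simp only [mukaiSq] at hsq
  linarith

end memDBN

theorem rank_mul_slope_eq {n r d a₀ f r₁ d₁ a₁ : ℤ} (hv₀ : r * a₀ + f = n * d ^ 2 + 1)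
    (hv₁ : r₁ * a₁ = n * d₁ ^ 2 + 1) :
    r * r₁ * (a₁ * d - a₀ * d₁) =
      -(n * (r₁ * d - r * d₁) * d * d₁) + r * d - r₁ * d₁ + r₁ * d₁ * f := by
  linear_combination d * r * hv₁ - d₁ * r₁ * hv₀

theorem lt_of_mul_le_of_remainder_lt {r d f r₁ d₁ x : ℤ} (hr : 2 ≤ r) (hr₁ : 0 < r₁)
    (hd₁ : 0 < d₁) (hd₁d : d₁ ≤ d) (hf : f < r)
    (hx : d * x ≤ r * d - r₁ * d₁ + r₁ * d₁ * f - r * r₁) :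
    x < r + r₁ * (r - 2) := by
  refine lt_of_mul_lt_mul_left (a := d) ?_ (by linarith)
  nlinarith [mul_le_mul_of_nonneg_left (by linarith : f ≤ r - 1) (mul_pos hr₁ hd₁).le,
    mul_le_mul_of_nonneg_left hd₁d (mul_nonneg hr₁.le (by linarith : (0 : ℤ) ≤ r - 2))]

theorem DBN_numerical_constraints_general (n r d a₀ f r₁ d₁ a₁ : ℤ) (hn : 0 < n)
    (hr : 2 ≤ r)
    (ha₀ : a₀ = (n * d ^ 2 + 1) / r) (hf : f = (n * d ^ 2 + 1) - r * a₀)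
    (h : memDBN n r d a₀ r₁ d₁ a₁) :
    r * r₁ * (a₁ * d - a₀ * d₁) =
        -(n * (r₁ * d - r * d₁) * d * d₁) + r * d - r₁ * d₁ + r₁ * d₁ * f ∧
    (1 ≤ n * d * d₁ * (r₁ * d - r * d₁) ∧
      n * d * d₁ * (r₁ * d - r * d₁) ≤ r * d - r₁ * d₁ + r₁ * d₁ * f - r * r₁) ∧
    (1 ≤ d₁ * n * (r₁ * d - r * d₁) ∧
      d₁ * n * (r₁ * d - r * d₁) < r + r₁ * (r - 2)) := by
  have hr₁ := h.rank_pos_s11 (by omega)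
  have hv₀ : r * a₀ + f = n * d ^ 2 + 1 := by rw [hf]; ring
  have hi := rank_mul_slope_eq hv₀ (h.rank_mul_eq hn (by omega))
  have hf_lt : f < r := by
    rw [hf, ha₀, ← Int.emod_def]
    exact Int.emod_lt_of_pos _ (by omega)
  obtain ⟨⟨-, hd₁, hd₁d, -, -⟩, hm, hkm⟩ := h
  have hm' : 0 < r₁ * d - r * d₁ := by linarith
  have hrr₁ : 0 ≤ r * r₁ := by positivity
  have hii : n * d * d₁ * (r₁ * d - r * d₁) ≤ r * d - r₁ * d₁ + r₁ * d₁ * f - r * r₁ := by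
    linarith [mul_le_mul_of_nonneg_left (hm.trans_le hkm) hrr₁]
  refine ⟨hi, ⟨?_, hii⟩, ?_, lt_of_mul_le_of_remainder_lt hr hr₁ hd₁ hd₁d hf_lt ?_⟩
  · linarith [mul_pos (mul_pos (mul_pos hn (hd₁.trans_le hd₁d)) hd₁) hm']
  · linarith [mul_pos (mul_pos hd₁ hn) hm']
  · linarith

/-- with `a₀ = ⌊(nd² + 1)/r⌋`, `f` the remainder of `nd² + 1`
modulo `r`, `v₀ = (r, d, a₀)`, and `v₁ = (r₁, d₁, a₁) ∈ D_{v₀}^{BN}`,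
setting `m = r₁d − rd₁` and `k = a₁d − a₀d₁`:
(i) `rr₁k = −nmdd₁ + rd − r₁d₁ + r₁d₁f`;
(ii) `1 ≤ ndd₁m ≤ rd − r₁d₁ + r₁d₁f − rr₁`;
(iii) `1 ≤ d₁nm < r + r₁(r − 2)`. -/
theorem DBN_numerical_constraints (n r d a₀ f r₁ d₁ a₁ : ℤ) (hn : 0 < n)
    (hr : 2 ≤ r) (hd : 0 < d)
    (ha₀ : a₀ = (n * d ^ 2 + 1) / r) (hf : f = (n * d ^ 2 + 1) - r * a₀)
    (h : memDBN n r d a₀ r₁ d₁ a₁) :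
    r * r₁ * (a₁ * d - a₀ * d₁) =
        -(n * (r₁ * d - r * d₁) * d * d₁) + r * d - r₁ * d₁ + r₁ * d₁ * f ∧
    (1 ≤ n * d * d₁ * (r₁ * d - r * d₁) ∧
      n * d * d₁ * (r₁ * d - r * d₁) ≤ r * d - r₁ * d₁ + r₁ * d₁ * f - r * r₁) ∧
    (1 ≤ d₁ * n * (r₁ * d - r * d₁) ∧
      d₁ * n * (r₁ * d - r * d₁) < r + r₁ * (r - 2)) :=
  DBN_numerical_constraints_general n r d a₀ f r₁ d₁ a₁ hn hr ha₀ hf h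
end

section
/- Let n be a positive integer and let v = (r, d, a) be an integer triple with r ≥ 0, a ≥ 0, d > 0, v² = 2nd² − 2ra ≥ −2, and n ≥ r. Suppose v₁ = (r₁, d₁, a₁) ∈ D_v and set m = r₁d − rd₁, k = a₁d − ad₁. Then d₁ = 1 and one of the following holds: (1) r₁d = r + 1, r₁a₁ = n + 1, and kr₁² ≤ 2r − n; (2) n = r, v = (r, r + 2, r² + 3r + 1), and v₁ = (1, 1, r + 1); (3) n = r = 1, v = (1, d, 2d − 1) with d ≥ 2, and v₁ = (1, 1, 2). -/
/-!
Write `m = r₁d − rd₁` and `k = a₁d − ad₁`. Everything follows from the two identities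
`d₁⟨v, v₁⟩ = a₁m + r₁k + d·v₁²` and `d⟨v, v₁⟩ = d₁·v² − rk − am` together with `⟨v, v₁⟩ ≤ 1`.
First `r₁, a₁ > 0`, since otherwise `⟨v, v₁⟩ ≥ 2ndd₁`. If `m, k < 0`, then `r ≤ n` forces `a > d²`,
and the second identity gives `r + a ≤ d + 2d₁ ≤ 3d`, which is impossible; so `m, k > 0`.
The first identity then bounds `a₁m + r₁k` by `d₁` when `v₁² = 0`, contradicting
`(a₁ + r₁)² ≥ 4r₁a₁ = 4nd₁²`, and by `2d − d₁` when `v₁² = −2`. Against `m ≥ r₁d − nd₁` and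
`r₁a₁ = nd₁² + 1` this budget only leaves `d₁ = 1`. Then `m = 1` is case (1), while `m ≥ 2`
forces `r₁(r₁ + 1) ≤ 2`, i.e. `v₁ = (1, 1, n + 1)`, and the budget pins down cases (2) and (3).
-/

theorem d₁_mul_mukaiPair_eq (n r d a r₁ d₁ a₁ : ℤ) :
    d₁ * mukaiPair n r d a r₁ d₁ a₁ =
      a₁ * (r₁ * d - r * d₁) + r₁ * (a₁ * d - a * d₁) +
        d * mukaiSq n r₁ d₁ a₁ := by
  unfold mukaiPair mukaiSq; ring

theorem d_mul_mukaiPair_eq (n r d a r₁ d₁ a₁ : ℤ) :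
    d * mukaiPair n r d a r₁ d₁ a₁ =
      d₁ * mukaiSq n r d a - r * (a₁ * d - a * d₁) - a * (r₁ * d - r * d₁) := by
  unfold mukaiPair mukaiSq; ring

section

variable {n r d a r₁ d₁ a₁ : ℤ}

theorem pos_of_mukaiPair_le_one (hn : 0 < n) (hr : 0 ≤ r) (ha : 0 ≤ a) (hd : 0 < d)
    (hd₁ : 0 < d₁) (hsq : n * d₁ ^ 2 ≤ r₁ * a₁)
    (hpair : mukaiPair n r d a r₁ d₁ a₁ ≤ 1) : 0 < r₁ ∧ 0 < a₁ := by
  have hprod : 0 < r₁ * a₁ := lt_of_lt_of_le (by positivity) hsq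
  refine (pos_and_pos_or_neg_and_neg_of_mul_pos hprod).resolve_right ?_
  rintro ⟨hr₁, ha₁⟩
  unfold mukaiPair at hpair
  nlinarith [mul_pos (mul_pos hn hd) hd₁, mul_nonneg hr (neg_nonneg.2 ha₁.le),
    mul_nonneg (neg_nonneg.2 hr₁.le) ha]

theorem sq_lt_of_sub_neg_of_sub_neg (hnr : r ≤ n) (hd : 0 < d) (hd₁ : 0 < d₁)
    (hr₁ : 0 < r₁) (hsq : n * d₁ ^ 2 ≤ r₁ * a₁) (hm : r₁ * d - r * d₁ < 0)
    (hk : a₁ * d - a * d₁ < 0) : d ^ 2 < a := by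
  have hrn : r₁ * d + 1 ≤ n * d₁ := by nlinarith
  have hra : r₁ * a₁ * d + r₁ ≤ r₁ * a * d₁ := by nlinarith
  have : d ^ 2 * (r₁ * d₁) < a * (r₁ * d₁) := by nlinarith [mul_pos hd hd₁]
  exact lt_of_mul_lt_mul_right this (by positivity)

theorem not_sub_neg_and_sub_neg (hnr : r ≤ n) (hd : 0 < d) (hd₁ : 0 < d₁)
    (hd₁d : d₁ ≤ d) (hr₁ : 0 < r₁) (hsq : n * d₁ ^ 2 ≤ r₁ * a₁) (hv : -2 ≤ mukaiSq n r d a)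
    (hpair : mukaiPair n r d a r₁ d₁ a₁ ≤ 1) :
    ¬(r₁ * d - r * d₁ < 0 ∧ a₁ * d - a * d₁ < 0) := by
  rintro ⟨hm, hk⟩
  have ha := sq_lt_of_sub_neg_of_sub_neg hnr hd hd₁ hr₁ hsq hm hk
  have hr : 1 < r := by nlinarith
  have hid := d_mul_mukaiPair_eq n r d a r₁ d₁ a₁
  nlinarith [mul_le_mul_of_nonneg_left hpair hd.le, mul_le_mul_of_nonneg_left hv hd₁.le,
    mul_le_mul_of_nonneg_left (show 1 ≤ -(a₁ * d - a * d₁) by omega) (show 0 ≤ r by omega),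
    mul_le_mul_of_nonneg_left (show 1 ≤ -(r₁ * d - r * d₁) by omega) (show 0 ≤ a by nlinarith),
    sq_nonneg (2 * d - 3)]

theorem sub_pos_and_sub_pos_of_mul_pos (hnr : r ≤ n) (hd : 0 < d) (hd₁ : 0 < d₁)
    (hd₁d : d₁ ≤ d) (hr₁ : 0 < r₁) (hsq : n * d₁ ^ 2 ≤ r₁ * a₁) (hv : -2 ≤ mukaiSq n r d a)
    (hpair : mukaiPair n r d a r₁ d₁ a₁ ≤ 1)
    (hprod : 0 < (a₁ * d - a * d₁) * (r₁ * d - r * d₁)) :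
    0 < r₁ * d - r * d₁ ∧ 0 < a₁ * d - a * d₁ :=
  ((pos_and_pos_or_neg_and_neg_of_mul_pos hprod).resolve_right fun h =>
    not_sub_neg_and_sub_neg hnr hd hd₁ hd₁d hr₁ hsq hv hpair h.symm).symm

theorem mukaiSq_ne_zero (hn : 0 < n) (hd₁ : 0 < d₁) (hr₁ : 0 < r₁) (ha₁ : 0 < a₁)
    (hm : 0 < r₁ * d - r * d₁) (hk : 0 < a₁ * d - a * d₁)
    (hpair : mukaiPair n r d a r₁ d₁ a₁ ≤ 1) : mukaiSq n r₁ d₁ a₁ ≠ 0 := by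
  intro h₀
  have hid := d₁_mul_mukaiPair_eq n r d a r₁ d₁ a₁
  have hsum : a₁ + r₁ ≤ d₁ := by
    rw [h₀] at hid
    nlinarith [mul_le_mul_of_nonneg_left hpair hd₁.le]
  unfold mukaiSq at h₀
  nlinarith [sq_nonneg (a₁ - r₁), mul_le_mul hsum hsum (by omega) hd₁.le]

theorem le_mul_mul_of_le_two_mul_sub (hnr : r ≤ n) (hd₁ : 0 ≤ d₁) (hr₁ : 0 ≤ r₁)
    (ha₁ : 0 ≤ a₁) (hq : r₁ * a₁ = n * d₁ ^ 2 + 1) (hk : 0 < a₁ * d - a * d₁)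
    (hbudget : a₁ * (r₁ * d - r * d₁) + r₁ * (a₁ * d - a * d₁) ≤ 2 * d - d₁) :
    (n * d₁ ^ 2 - 1) * d + d₁ + r₁ ≤ n * d₁ * a₁ := by
  have hqd : r₁ * a₁ * d = (n * d₁ ^ 2 + 1) * d := by rw [hq]
  nlinarith [mul_le_mul_of_nonneg_left (mul_le_mul_of_nonneg_right hnr hd₁) ha₁,
    mul_le_mul_of_nonneg_left (show 1 ≤ a₁ * d - a * d₁ by omega) hr₁]

theorem eq_one_of_le_mul_mul (hn : 0 < n) (hd : 0 < d) (hd₁ : 0 < d₁) (hr₁ : 0 < r₁)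
    (hq : r₁ * a₁ = n * d₁ ^ 2 + 1)
    (hlow : (n * d₁ ^ 2 - 1) * d + d₁ + r₁ ≤ n * d₁ * a₁) (ha₁ : a₁ ≤ 2 * d - d₁ - r₁) :
    d₁ = 1 := by
  have hup : (n * d₁ ^ 2 - 1) * d + d₁ + r₁ ≤ n * d₁ * (2 * d - d₁ - r₁) :=
    hlow.trans (mul_le_mul_of_nonneg_left ha₁ (by positivity))
  have hle : d₁ ≤ 2 := by
    by_contra! h
    nlinarith [mul_pos (mul_pos hn hd₁) hd, mul_pos hn hd₁]
  have hne : d₁ ≠ 2 := by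
    rintro rfl
    have ha₁' : a₁ ≤ 4 * n + 1 := by nlinarith
    nlinarith
  omega

theorem eq_one_of_two_mul_add_le (hn : 0 < n) (hr₁ : 0 < r₁) (hq : r₁ * a₁ = n + 1)
    (hlow : (n - 1) * d + 1 + r₁ ≤ n * a₁) (ha₁ : 2 * a₁ + r₁ ≤ 2 * d - 1) :
    r₁ = 1 := by
  have h₁ : (n + 1) * (r₁ + 1) ≤ 2 * a₁ := by
    nlinarith [mul_le_mul_of_nonneg_left ha₁ (show 0 ≤ n - 1 by omega)]
  have h₂ : (n + 1) * (r₁ * (r₁ + 1)) ≤ (n + 1) * 2 := by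
    nlinarith [mul_le_mul_of_nonneg_left h₁ hr₁.le]
  have h₃ : r₁ * (r₁ + 1) ≤ 2 := le_of_mul_le_mul_left h₂ (by omega)
  nlinarith

theorem mul_sq_le_of_mul_eq_add_one (k : ℤ) (hr₁ : 0 < r₁) (hm : r₁ * d = r + 1)
    (hq : r₁ * a₁ = n + 1) (hbudget : a₁ + r₁ * k ≤ 2 * d - 1) :
    k * r₁ ^ 2 ≤ 2 * r - n := by
  nlinarith [mul_le_mul_of_nonneg_left hbudget hr₁.le]

theorem eq_of_add_two_le (hn : 0 < n) (hnr : r ≤ n) (hm : r + 2 ≤ d) (hk : a < (n + 1) * d)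
    (hbudget : (n + 1) * (d - r) + ((n + 1) * d - a) ≤ 2 * d - 1) :
    (n = r ∧ d = r + 2 ∧ a = r ^ 2 + 3 * r + 1) ∨
      (n = 1 ∧ r = 1 ∧ a = 2 * d - 1 ∧ 2 ≤ d) := by
  have hslack := mul_nonneg (show 0 ≤ n - 1 by omega) (show 0 ≤ d - r - 2 by omega)
  obtain rfl : r = n := by nlinarith
  have ha : a = (r + 1) * d - 1 := by nlinarith
  rcases (show r = 1 ∨ 2 ≤ r by omega) with rfl | hr
  · right; omega
  · left
    have hd : d ≤ r + 2 := by nlinarith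
    refine ⟨rfl, by omega, ?_⟩
    rw [ha, show d = r + 2 by omega]; ring

end

/-- classification of elements of `D_v` when `n ≥ r`. -/
theorem mem_D_classification_n_ge_r (n r d a r₁ d₁ a₁ : ℤ) (hn : 0 < n)
    (hr : 0 ≤ r) (ha : 0 ≤ a) (hd : 0 < d) (hv : -2 ≤ mukaiSq n r d a)
    (hnr : r ≤ n) (h : memD n r d a r₁ d₁ a₁) :
    d₁ = 1 ∧
      ((r₁ * d = r + 1 ∧ r₁ * a₁ = n + 1 ∧
          (a₁ * d - a * d₁) * r₁ ^ 2 ≤ 2 * r - n) ∨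
        (n = r ∧ d = r + 2 ∧ a = r ^ 2 + 3 * r + 1 ∧
          r₁ = 1 ∧ d₁ = 1 ∧ a₁ = r + 1) ∨
        (n = 1 ∧ r = 1 ∧ a = 2 * d - 1 ∧ 2 ≤ d ∧
          r₁ = 1 ∧ d₁ = 1 ∧ a₁ = 2)) := by
  obtain ⟨hsq, hd₁, hd₁d, hpair, hprod⟩ := h
  have hq₀ : n * d₁ ^ 2 ≤ r₁ * a₁ := by
    unfold mukaiSq at hsq; rcases hsq with h₀ | h₀ <;> linarith
  have hpair₁ : mukaiPair n r d a r₁ d₁ a₁ ≤ 1 := by omega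
  obtain ⟨hr₁, ha₁⟩ := pos_of_mukaiPair_le_one hn hr ha hd hd₁ hq₀ hpair₁
  obtain ⟨hm, hk⟩ :=
    sub_pos_and_sub_pos_of_mul_pos hnr hd hd₁ hd₁d hr₁ hq₀ hv hpair₁ hprod
  have hsq₂ := hsq.resolve_left (mukaiSq_ne_zero hn hd₁ hr₁ ha₁ hm hk hpair₁)
  have hq : r₁ * a₁ = n * d₁ ^ 2 + 1 := by unfold mukaiSq at hsq₂; linarith
  have hbudget : a₁ * (r₁ * d - r * d₁) + r₁ * (a₁ * d - a * d₁) ≤ 2 * d - d₁ := by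
    have hid := d₁_mul_mukaiPair_eq n r d a r₁ d₁ a₁
    rw [hsq₂] at hid hpair
    nlinarith
  have hlow := le_mul_mul_of_le_two_mul_sub hnr hd₁.le hr₁.le ha₁.le hq hk hbudget
  obtain rfl : d₁ = 1 := eq_one_of_le_mul_mul hn hd hd₁ hr₁ hq hlow (by nlinarith)
  refine ⟨rfl, ?_⟩
  simp only [one_pow, mul_one, true_and] at hq hlow hbudget hm hk ⊢
  rcases (show r₁ * d - r = 1 ∨ 2 ≤ r₁ * d - r by omega) with hm₁ | hm₂
  · rw [hm₁, mul_one] at hbudget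
    exact .inl ⟨by omega, hq, mul_sq_le_of_mul_eq_add_one _ hr₁ (by omega) hq hbudget⟩
  · have ha₁d : 2 * a₁ + r₁ ≤ 2 * d - 1 := by
      nlinarith [mul_le_mul_of_nonneg_left hm₂ ha₁.le, mul_le_mul_of_nonneg_left hk hr₁.le]
    obtain rfl := eq_one_of_two_mul_add_le hn hr₁ hq hlow ha₁d
    obtain rfl : a₁ = n + 1 := by omega
    rcases eq_of_add_two_le (d := d) (a := a) hn hnr (by omega) (by omega) (by linarith) with
      ⟨rfl, hdr, har⟩ | ⟨rfl, rfl, had, hd₂⟩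
    · exact .inr (.inl ⟨rfl, hdr, har, rfl, rfl⟩)
    · exact .inr (.inr ⟨rfl, rfl, had, hd₂, rfl, rfl⟩)
end

section
/- Let n be a positive integer and let v = (r, d, 1) be an integer triple with r ≥ 0, d > 0 and v² = 2nd² − 2r ≥ −2. If D_v ≠ ∅, then n = 1, r = 2d − 1 (i.e. v = (r, (r+1)/2, 1)), and D_v = {(2, 1, 1)}. -/
/-!
Write `v₁² = -2ε` with `ε ∈ {0, 1}`, so `r₁a₁ = nd₁² + ε`. Since `r ≥ 0`, the pairing condition
rules out `r₁, a₁ < 0`, so both are positive and then so are both slope factors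
`t = a₁d − d₁` and `s = r₁d − rd₁`. Multiplying the pairing condition by `a₁d₁` and eliminating
`r₁a₁` gives `nd₁²t + sa₁² ≤ εt + a₁d₁ + 2εd₁(1 − a₁)`. For `ε = 0` this contradicts
`d₁² + a₁² > a₁d₁`; for `ε = 1` it forces `a₁ = 1`, then `nd₁² ≤ d₁`, so `n = d₁ = 1`,
`s = 1`, and `r₁ = 2`, `r = 2d − 1`.
-/

section

variable {n r d r₁ d₁ a₁ ε : ℤ}

lemma exists_mul_eq_of_memD_one (h : memD n r d 1 r₁ d₁ a₁) :
    ∃ ε, (ε = 0 ∨ ε = 1) ∧ r₁ * a₁ = n * d₁ ^ 2 + ε ∧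
      2 * n * d * d₁ + 2 * ε - 1 ≤ r * a₁ + r₁ := by
  obtain ⟨hsq, -, -, hpair, -⟩ := h
  simp only [mukaiSq, mukaiPair] at hsq hpair
  rcases hsq with hsq | hsq
  · exact ⟨0, .inl rfl, by linarith, by linarith⟩
  · exact ⟨1, .inr rfl, by linarith, by linarith⟩

lemma pos_of_mul_eq_of_pairing (hn : 0 < n) (hr : 0 ≤ r) (hd₁ : 0 < d₁) (hd₁d : d₁ ≤ d)
    (hε : 0 ≤ ε) (hE : r₁ * a₁ = n * d₁ ^ 2 + ε)
    (hQ : 2 * n * d * d₁ + 2 * ε - 1 ≤ r * a₁ + r₁) :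
    0 < a₁ ∧ 0 < r₁ := by
  have hprod : 0 < r₁ * a₁ := by rw [hE]; positivity
  rcases pos_and_pos_or_neg_and_neg_of_mul_pos hprod with ⟨hr₁, ha₁⟩ | ⟨hr₁, ha₁⟩
  · exact ⟨ha₁, hr₁⟩
  · have hd : 0 < d := by omega
    nlinarith [mul_pos (mul_pos hn hd) hd₁, mul_nonpos_of_nonneg_of_nonpos hr ha₁.le]

lemma slope_inequality (hd₁ : 0 < d₁) (ha₁ : 0 < a₁) (hE : r₁ * a₁ = n * d₁ ^ 2 + ε)
    (hQ : 2 * n * d * d₁ + 2 * ε - 1 ≤ r * a₁ + r₁) :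
    n * d₁ ^ 2 * (a₁ * d - d₁) + (r₁ * d - r * d₁) * a₁ ^ 2 ≤
      ε * (a₁ * d - d₁) + a₁ * d₁ + 2 * ε * d₁ * (1 - a₁) := by
  have := mul_le_mul_of_nonneg_left hQ (mul_pos hd₁ ha₁).le
  linear_combination this + (a₁ * d + d₁) * hE

theorem memD_one_eq (hn : 0 < n) (hr : 0 ≤ r) (h : memD n r d 1 r₁ d₁ a₁) :
    n = 1 ∧ r = 2 * d - 1 ∧ r₁ = 2 ∧ d₁ = 1 ∧ a₁ = 1 ∧ 2 ≤ d := by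
  obtain ⟨ε, hε, hE, hQ⟩ := exists_mul_eq_of_memD_one h
  obtain ⟨-, hd₁, hd₁d, -, hst⟩ := h
  simp only [one_mul] at hst
  obtain ⟨ha₁, hr₁⟩ := pos_of_mul_eq_of_pairing hn hr hd₁ hd₁d (by omega) hE hQ
  have ht : 0 < a₁ * d - d₁ := by
    refine lt_of_le_of_ne ?_ fun h0 ↦ ?_
    · nlinarith
    · rw [← h0, zero_mul] at hst; exact hst.false
  have hs : 0 < r₁ * d - r * d₁ := pos_of_mul_pos_right hst ht.le
  have key := slope_inequality hd₁ ha₁ hE hQ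
  rcases hε with rfl | rfl
  · nlinarith [mul_le_mul_of_nonneg_right ht (by positivity : 0 ≤ n * d₁ ^ 2)]
  have hnd₁ : 1 ≤ n * d₁ ^ 2 := by nlinarith
  obtain rfl : a₁ = 1 := by
    by_contra ha₁'
    have : 0 ≤ d₁ * (a₁ - 2) := mul_nonneg hd₁.le (by omega)
    nlinarith [mul_le_mul_of_nonneg_right hnd₁ ht.le, mul_pos hs (pow_pos ha₁ 2)]
  have hn₁ : n * d₁ ^ 2 ≤ d₁ := by
    nlinarith [mul_nonneg (sub_nonneg.2 hnd₁) (sub_nonneg.2 (by omega : 1 ≤ 1 * d - d₁))]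
  obtain ⟨rfl, rfl⟩ : n = 1 ∧ d₁ = 1 := by
    have : n * d₁ ≤ 1 := le_of_mul_le_mul_right (by nlinarith) hd₁
    constructor <;> nlinarith
  obtain rfl : r₁ = 2 := by linarith
  exact ⟨rfl, by linarith, rfl, rfl, rfl, by linarith⟩

end

theorem D_of_a_eq_one_general (n r d : ℤ) (hn : 0 < n) (hr : 0 ≤ r)
    (hne : ∃ r₁ d₁ a₁ : ℤ, memD n r d 1 r₁ d₁ a₁) :
    n = 1 ∧ r = 2 * d - 1 ∧
      ∀ r₁ d₁ a₁ : ℤ,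
        memD n r d 1 r₁ d₁ a₁ ↔ (r₁ = 2 ∧ d₁ = 1 ∧ a₁ = 1) := by
  obtain ⟨r₀, d₀, a₀, hm⟩ := hne
  obtain ⟨rfl, rfl, -, -, -, hd⟩ := memD_one_eq hn hr hm
  refine ⟨rfl, rfl, fun r₁ d₁ a₁ ↦ ⟨fun h ↦ ?_, ?_⟩⟩
  · obtain ⟨-, -, h₁, h₂, h₃, -⟩ := memD_one_eq hn hr h
    exact ⟨h₁, h₂, h₃⟩
  · rintro ⟨rfl, rfl, rfl⟩
    refine ⟨.inr (by norm_num [mukaiSq]), one_pos, by omega, ?_, ?_⟩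
    · simp only [mukaiSq, mukaiPair]; linarith
    · nlinarith

/-- for `v = (r, d, 1)` with `r ≥ 0`, `d > 0`, `v² ≥ −2`:
if `D_v ≠ ∅` then `n = 1`, `r = 2d − 1`, and `D_v = {(2, 1, 1)}`. -/
theorem D_of_a_eq_one (n r d : ℤ) (hn : 0 < n) (hr : 0 ≤ r) (hd : 0 < d)
    (hv : -2 ≤ mukaiSq n r d 1)
    (hne : ∃ r₁ d₁ a₁ : ℤ, memD n r d 1 r₁ d₁ a₁) :
    n = 1 ∧ r = 2 * d - 1 ∧
      ∀ r₁ d₁ a₁ : ℤ,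
        memD n r d 1 r₁ d₁ a₁ ↔ (r₁ = 2 ∧ d₁ = 1 ∧ a₁ = 1) :=
  D_of_a_eq_one_general n r d hn hr hne
end

section
/- Let n be a positive integer and let v = (r, d, 2) be an integer triple with r ≥ 0, d > 0 and v² = 2nd² − 4r ≥ −2. If v₁ ∈ D_v, then (n, v, v₁) is one of the following: for n = 1: (v, v₁) = ((11, 5, 2), (5, 2, 1)), or ((23, 7, 2), (10, 3, 1)), or ((12, 5, 2), (5, 2, 1)), or v = (r, d, 2) with d ≥ 3 and 2d − 3 ≤ r ≤ 2d − 1 and v₁ = (2, 1, 1); for n = 2: (v, v₁) = ((11, 4, 2), (3, 1, 1)), or ((7, 3, 2), (3, 1, 1)), or ((8, 3, 2), (3, 1, 1)); for n = 3: v = (11, 3, 2) and v₁ = (4, 1, 1). For all other n, D_v = ∅. -/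
/-!
Write `v₁² = -2t` with `t ∈ {0, 1}`, so that `r₁a₁ = nd₁² + t`, and the pairing condition reads
`2ndd₁ + 2t ≤ ra₁ + 2r₁ + 1`; the pairing condition together with `r ≥ 0` forces `a₁ > 0`.
The sign condition says that `v₁` lies on the same side of `v` in both slopes `a/d` and `r/d`.
If `v₁` lies below `v`, then `a₁ = 1` and `r > ndd₁ ≥ nd(d + 1)/2`, contradicting `v² ≥ -2`.
If `v₁` lies above `v`, multiplying the pairing condition by `d₁a₁` and inserting both slope
inequalities gives `nd₁² + a₁² + (2t - 1)a₁d₁ ≤ t(4d₁ + 1)`, which forces `t = 1`, `a₁ = 1` and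
`nd₁ ≤ 3`; each of the five remaining pairs `(n, d₁)` leaves linear conditions on `(r, d)`.
-/

section

variable {n r d r₁ d₁ a₁ t : ℤ}

lemma a₁_pos_of_pairing (hn : 0 < n) (hr : 0 ≤ r) (hd : 0 < d) (hd₁ : 0 < d₁) (ht : 0 ≤ t)
    (hE : r₁ * a₁ = n * d₁ ^ 2 + t) (hP : 2 * n * d * d₁ + 2 * t ≤ r * a₁ + 2 * r₁ + 1) :
    0 < a₁ := by
  have hnd₁ : 0 < n * d₁ ^ 2 := by positivity
  have hndd₁ : 0 < n * d * d₁ := by positivity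
  by_contra! ha₁
  have hr₁ : r₁ < 0 := by
    by_contra! hr₁
    nlinarith [mul_nonneg hr₁ (neg_nonneg.mpr ha₁)]
  nlinarith [mul_nonneg hr (neg_nonneg.mpr ha₁)]

lemma false_of_slopes_lt (hn : 0 ≤ n) (hd₁ : 0 < d₁) (hd₁d : d₁ ≤ d) (ht : 0 ≤ t)
    (ha₁ : 0 < a₁) (hE : r₁ * a₁ = n * d₁ ^ 2 + t) (hV : 2 * r ≤ n * d ^ 2 + 1)
    (h₁ : a₁ * d < 2 * d₁) (h₂ : r₁ * d < r * d₁) : False := by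
  obtain rfl : a₁ = 1 := by nlinarith
  have hr : n * d₁ * d < r := by
    by_contra! hr
    nlinarith [mul_le_mul_of_nonneg_right hr hd₁.le, mul_nonneg ht (hd₁.trans_le hd₁d).le]
  nlinarith [mul_nonneg hn (hd₁.trans_le hd₁d).le]

lemma pairing_mul_le_of_slope_gt (hd₁ : 0 ≤ d₁) (ha₁ : 0 ≤ a₁)
    (hE : r₁ * a₁ = n * d₁ ^ 2 + t) (hP : 2 * n * d * d₁ + 2 * t ≤ r * a₁ + 2 * r₁ + 1)
    (h₂ : r * d₁ < r₁ * d) :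
    n * d * d₁ ^ 2 + a₁ + (2 * t - 1) * d₁ ≤ 2 * r₁ * d₁ + t * d := by
  have h₂' : r * d₁ + 1 ≤ r₁ * d := h₂
  nlinarith [mul_le_mul_of_nonneg_left hP hd₁, mul_le_mul_of_nonneg_left h₂' ha₁,
    congrArg (· * d) hE]

lemma eq_one_of_slopes_gt (hn : 0 < n) (hd₁ : 0 < d₁) (ht : t = 0 ∨ t = 1)
    (ha₁ : 0 < a₁) (hE : r₁ * a₁ = n * d₁ ^ 2 + t)
    (hP : 2 * n * d * d₁ + 2 * t ≤ r * a₁ + 2 * r₁ + 1)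
    (h₁ : 2 * d₁ < a₁ * d) (h₂ : r * d₁ < r₁ * d) :
    t = 1 ∧ a₁ = 1 ∧ n * d₁ ≤ 3 := by
  have hT := pairing_mul_le_of_slope_gt hd₁.le ha₁.le hE hP h₂
  have hnt : t ≤ n * d₁ ^ 2 := by rcases ht with rfl | rfl <;> nlinarith
  have key : n * d₁ ^ 2 + a₁ ^ 2 + (2 * t - 1) * a₁ * d₁ ≤ t * (4 * d₁ + 1) := by
    nlinarith [mul_le_mul_of_nonneg_right hT ha₁.le,
      mul_le_mul_of_nonneg_left h₁ (sub_nonneg.mpr hnt)]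
  obtain rfl : t = 1 := by
    rcases ht with rfl | rfl
    · nlinarith [sq_nonneg (a₁ - d₁), mul_pos hn (pow_pos hd₁ 2)]
    · rfl
  obtain rfl : a₁ = 1 := by nlinarith
  exact ⟨rfl, rfl, by nlinarith⟩

end

/-- classification of `(n, v, v₁)` with `v = (r, d, 2)` and
`v₁ ∈ D_v` (in particular, for `n ≥ 4` one has `D_v = ∅`). -/
theorem D_of_a_eq_two (n r d r₁ d₁ a₁ : ℤ) (hn : 0 < n) (hr : 0 ≤ r)
    (hd : 0 < d) (hv : -2 ≤ mukaiSq n r d 2)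
    (h : memD n r d 2 r₁ d₁ a₁) :
    (n = 1 ∧
      ((r = 11 ∧ d = 5 ∧ r₁ = 5 ∧ d₁ = 2 ∧ a₁ = 1) ∨
        (r = 23 ∧ d = 7 ∧ r₁ = 10 ∧ d₁ = 3 ∧ a₁ = 1) ∨
        (3 ≤ d ∧ 2 * d - 3 ≤ r ∧ r ≤ 2 * d - 1 ∧ r₁ = 2 ∧ d₁ = 1 ∧ a₁ = 1) ∨
        (r = 12 ∧ d = 5 ∧ r₁ = 5 ∧ d₁ = 2 ∧ a₁ = 1))) ∨
    (n = 2 ∧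
      ((r = 11 ∧ d = 4 ∧ r₁ = 3 ∧ d₁ = 1 ∧ a₁ = 1) ∨
        (r = 7 ∧ d = 3 ∧ r₁ = 3 ∧ d₁ = 1 ∧ a₁ = 1) ∨
        (r = 8 ∧ d = 3 ∧ r₁ = 3 ∧ d₁ = 1 ∧ a₁ = 1))) ∨
    (n = 3 ∧ r = 11 ∧ d = 3 ∧ r₁ = 4 ∧ d₁ = 1 ∧ a₁ = 1) := by
  obtain ⟨hsq₀, hd₁, hd₁d, hpair, hsign⟩ := h
  obtain ⟨t, ht, hsq⟩ : ∃ t : ℤ, (t = 0 ∨ t = 1) ∧ mukaiSq n r₁ d₁ a₁ = -2 * t := by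
    rcases hsq₀ with h | h
    exacts [⟨0, by simp [h]⟩, ⟨1, by simp [h]⟩]
  have ht₀ : 0 ≤ t := by omega
  have hE : r₁ * a₁ = n * d₁ ^ 2 + t := by unfold mukaiSq at hsq; linarith
  have hP : 2 * n * d * d₁ + 2 * t ≤ r * a₁ + 2 * r₁ + 1 := by
    rw [hsq] at hpair; unfold mukaiPair at hpair; linarith
  have hV : 2 * r ≤ n * d ^ 2 + 1 := by unfold mukaiSq at hv; linarith
  have ha₁ := a₁_pos_of_pairing hn hr hd hd₁ ht₀ hE hP
  rcases mul_pos_iff.mp hsign with ⟨h₁, h₂⟩ | ⟨h₁, h₂⟩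
  · obtain ⟨rfl, rfl, hnd₁⟩ :=
      eq_one_of_slopes_gt hn hd₁ ht ha₁ hE hP (by linarith) (by linarith)
    obtain rfl : r₁ = n * d₁ ^ 2 + 1 := by linarith
    have hn₃ : n ≤ 3 := by nlinarith
    have hd₁₃ : d₁ ≤ 3 := by nlinarith
    interval_cases n <;> interval_cases d₁ <;> norm_num at h₂ hP ⊢ <;> omega
  · exact (false_of_slopes_lt hn.le hd₁ hd₁d ht₀ ha₁ hE hV (by linarith) (by linarith)).elim
end

section
/- Let n be a positive integer and let v = (r, d, a) be an integer triple with r > 0, d > 0 and v² = 2nd² − 2ra ≥ −2. Let p be a positive integer and assume a ≥ −pdn, with strict inequality a > −pdn if n = 1 and p = 1. Then D_{e^{pH}·v} ⊆ e^{pH}·(D_v ∪ {(1, 0, 1)}); explicitly, for every v₁' = (r₁', d₁', a₁') ∈ D_{e^{pH}·v} with v₁' ≠ (1, p, np² + 1), the triple e^{−pH}·v₁' = (r₁', d₁' − r₁'p, a₁' + nr₁'p² − 2nd₁'p) belongs to D_v. -/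
/-!
Untwist: put `v₁ = (r₁, d₁, b) := e^{-pH}·v₁'`. The twist preserves Mukai squares and pairings
and the cross term `s = r₁d - rd₁`, so only `0 < d₁ ≤ d` and the sign of `A·s`, `A = bd - ad₁`,
need proof. The twisted sign condition reads `A'·s > 0` with
`A' = (b + npd₁)(d + rp) - (a + npd)(d₁ + r₁p)`. If `d₁ ≤ 0` then `s > 0`, and `a + npd ≥ 0`
forces `r₁(b + npd₁) = nd₁(d₁ + r₁p) + (r₁b - nd₁²) > 0`, which with `v₁² ≥ -2` leaves only
`v₁ = (1, 0, 1)`. Next `⟨v, v₁⟩ < 2` forces `r₁ > 0`. If `d₁ > d` then `s < 0`, while `v² ≥ -2`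
and `v₁² ≤ 0` give `r·r₁·A' > 0`. Finally
`r₁d₁·A'·s = (r₁d₁ + pr₁²)·A·s - ps²(r₁b + npr₁d₁)` transfers the sign of `A'·s` to `A·s`.
-/

/-- `e^{pH}·(r, d, a) = (r, twistD r d p, twistA n r d a p)`. -/
def twistD (r d p : ℤ) : ℤ := d + r * p

def twistA (n r d a p : ℤ) : ℤ := a + 2 * n * d * p + n * r * p ^ 2

section Twist

variable {n r d a p r₁ d₁ b : ℤ}

theorem mukaiSq_twist : mukaiSq n r (twistD r d p) (twistA n r d a p) = mukaiSq n r d a := by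
  unfold mukaiSq twistD twistA; ring

theorem mukaiPair_twist :
    mukaiPair n r (twistD r d p) (twistA n r d a p) r₁ (twistD r₁ d₁ p) (twistA n r₁ d₁ b p) =
      mukaiPair n r d a r₁ d₁ b := by
  unfold mukaiPair twistD twistA; ring

theorem twistD_cross : r₁ * twistD r d p - r * twistD r₁ d₁ p = r₁ * d - r * d₁ := by
  unfold twistD; ring

theorem twistA_cross :
    twistA n r₁ d₁ b p * twistD r d p - twistA n r d a p * twistD r₁ d₁ p =
      (b + n * p * d₁) * twistD r d p - (a + n * p * d) * twistD r₁ d₁ p := by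
  unfold twistD twistA; ring

theorem bounds_of_mukaiSq_eq (h : mukaiSq n r d a = 0 ∨ mukaiSq n r d a = -2) :
    n * d ^ 2 ≤ r * a ∧ r * a ≤ n * d ^ 2 + 1 := by
  unfold mukaiSq at h
  constructor <;> rcases h with h | h <;> linarith

theorem eq_one_zero_one_of_memD_twist_of_nonpos (hn : 0 < n) (hr : 0 < r) (hd : 0 < d)
    (hp : 0 ≤ p) (ha : 0 ≤ a + n * p * d)
    (h : memD n r (twistD r d p) (twistA n r d a p) r₁ (twistD r₁ d₁ p) (twistA n r₁ d₁ b p))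
    (hd₁ : d₁ ≤ 0) : r₁ = 1 ∧ d₁ = 0 ∧ b = 1 := by
  obtain ⟨hsq, hD, -, -, hslope⟩ := h
  rw [twistA_cross, twistD_cross] at hslope
  unfold twistD at hD hslope
  rw [mukaiSq_twist] at hsq
  have hv₁ := (bounds_of_mukaiSq_eq hsq).2
  have hr₁ : 0 < r₁ := by nlinarith
  have hs : 0 < r₁ * d - r * d₁ := by nlinarith
  have hb : 0 < b + n * p * d₁ := by
    have hA := (pos_iff_pos_of_mul_pos hslope).2 hs
    have : 0 < (b + n * p * d₁) * (d + r * p) := by nlinarith [mul_nonneg ha hD.le]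
    exact pos_of_mul_pos_left this (by nlinarith)
  have hd₁0 : d₁ = 0 := by nlinarith [mul_pos hr₁ hb, mul_pos hn hD]
  subst hd₁0
  have hr₁b : r₁ * b = 1 := by nlinarith [mul_pos hr₁ hb]
  obtain ⟨h1, hb1⟩ | ⟨h1, -⟩ := Int.eq_one_or_neg_one_of_mul_eq_one' hr₁b
  · exact ⟨h1, rfl, hb1⟩
  · omega

theorem rank_pos_of_mukaiPair_lt_two (hn : 0 < n) (hd : 0 < d) (hr : 0 ≤ r) (hp : 0 ≤ p)
    (ha : 0 ≤ a + n * p * d) (hd₁ : 0 < d₁) (hD : 0 < d₁ + r₁ * p) (hsq : n * d₁ ^ 2 ≤ r₁ * b)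
    (hpair : mukaiPair n r d a r₁ d₁ b < 2) : 0 < r₁ := by
  unfold mukaiPair at hpair
  by_contra! hr₁
  rcases hr₁.lt_or_eq with hr₁ | rfl
  · have hnd : 1 ≤ n * d := by nlinarith
    -- in `-r₁ · ⟨v, v₁⟩ = -2ndd₁r₁ + r·r₁b + r₁²a` bound `d₁ ≥ 1 - r₁p`, `r₁b ≥ 0`, `a ≥ -npd`
    have hd₁p : 1 - r₁ * p ≤ d₁ := by linarith
    nlinarith [mul_le_mul_of_nonneg_left hd₁p (by nlinarith : 0 ≤ -2 * n * d * r₁),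
      mul_nonneg hr (le_trans (by positivity) hsq), mul_le_mul_of_nonneg_left ha (sq_nonneg r₁),
      mul_nonneg (mul_nonneg (mul_pos hn hd).le hp) (sq_nonneg r₁),
      mul_le_mul_of_nonneg_left hnd (by linarith : 0 ≤ -r₁)]
  · nlinarith [mul_pos hn (mul_pos hd₁ hd₁)]

theorem deg_le_of_memD_twist (hn : 0 < n) (hr : 0 < r) (hp : 0 < p) (hr₁ : 0 < r₁)
    (hd₁ : 0 < d₁) (hv : -2 ≤ mukaiSq n r d a)
    (h : memD n r (twistD r d p) (twistA n r d a p) r₁ (twistD r₁ d₁ p) (twistA n r₁ d₁ b p)) :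
    d₁ ≤ d := by
  obtain ⟨hsq, -, hDle, -, hslope⟩ := h
  rw [mukaiSq_twist] at hsq
  have hv₁ := (bounds_of_mukaiSq_eq hsq).1
  rw [twistA_cross, twistD_cross] at hslope
  unfold twistD at hDle hslope
  unfold mukaiSq at hv
  by_contra! hdd₁
  have hrr₁ : r₁ < r := lt_of_mul_lt_mul_right (by linarith : r₁ * p < r * p) hp.le
  have hs : r₁ * d - r * d₁ < 0 := by nlinarith
  have hA := neg_of_mul_pos_left hslope hs.le
  set D := d₁ + r₁ * p
  set X := d + r * p
  have hD : 0 < D := add_pos hd₁ (mul_pos hr₁ hp)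
  have h1 : n * d₁ * D ≤ r₁ * (b + n * p * d₁) := by nlinarith
  have h2 : r * a ≤ n * d ^ 2 + 1 := by linarith
  have hlow : n * D * X * (r * d₁ - r₁ * d) - r₁ * D ≤
      r * r₁ * ((b + n * p * d₁) * X - (a + n * p * d) * D) := by
    nlinarith [mul_le_mul_of_nonneg_left h1 (mul_pos hr (hD.trans_le hDle)).le,
      mul_le_mul_of_nonneg_left h2 (by positivity : 0 ≤ r₁ * D)]
  have hX : r₁ < X := by nlinarith
  have hnX : X ≤ n * X * (r * d₁ - r₁ * d) := by
    have hnk : 1 * 1 ≤ n * (r * d₁ - r₁ * d) := mul_le_mul hn (by linarith) zero_le_one hn.le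
    nlinarith [mul_le_mul_of_nonneg_left hnk (hD.trans_le hDle).le]
  have : 0 < n * D * X * (r * d₁ - r₁ * d) - r₁ * D := by
    nlinarith [mul_lt_mul_of_pos_left (hX.trans_le hnX) hD]
  nlinarith [mul_pos (mul_pos hr hr₁) (neg_pos.2 hA)]

theorem slope_pos_of_memD_twist (hn : 0 ≤ n) (hp : 0 ≤ p) (hr₁ : 0 < r₁) (hd₁ : 0 < d₁)
    (h : memD n r (twistD r d p) (twistA n r d a p) r₁ (twistD r₁ d₁ p) (twistA n r₁ d₁ b p)) :
    0 < (b * d - a * d₁) * (r₁ * d - r * d₁) := by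
  obtain ⟨hsq, -, -, -, hslope⟩ := h
  rw [mukaiSq_twist] at hsq
  have hb : 0 ≤ r₁ * b := le_trans (by positivity) (bounds_of_mukaiSq_eq hsq).1
  rw [twistD_cross] at hslope
  set s := r₁ * d - r * d₁
  have hcross :
      r₁ * d₁ * ((twistA n r₁ d₁ b p * twistD r d p - twistA n r d a p * twistD r₁ d₁ p) * s) =
        (r₁ * d₁ + p * r₁ ^ 2) * ((b * d - a * d₁) * s) -
          p * s ^ 2 * (r₁ * b + n * p * r₁ * d₁) := by
    unfold twistA twistD; ring
  by_contra! hAs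
  nlinarith [mul_pos (mul_pos hr₁ hd₁) hslope,
    mul_nonpos_of_nonneg_of_nonpos (by positivity : 0 ≤ r₁ * d₁ + p * r₁ ^ 2) hAs,
    mul_nonneg (mul_nonneg hp (sq_nonneg s)) (by positivity : 0 ≤ r₁ * b + n * p * r₁ * d₁)]

theorem memD_of_memD_twist (hn : 0 < n) (hr : 0 < r) (hd : 0 < d) (hv : -2 ≤ mukaiSq n r d a)
    (hp : 0 < p) (ha : 0 ≤ a + n * p * d)
    (h : memD n r (twistD r d p) (twistA n r d a p) r₁ (twistD r₁ d₁ p) (twistA n r₁ d₁ b p))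
    (hne : ¬(r₁ = 1 ∧ d₁ = 0 ∧ b = 1)) : memD n r d a r₁ d₁ b := by
  have hd₁ : 0 < d₁ := by
    by_contra! hd₁
    exact hne (eq_one_zero_one_of_memD_twist_of_nonpos hn hr hd hp.le ha h hd₁)
  have ⟨hsq, hD, _, hpair, _⟩ := h
  rw [mukaiSq_twist] at hsq
  rw [mukaiPair_twist, mukaiSq_twist] at hpair
  have hpair2 : mukaiPair n r d a r₁ d₁ b < 2 := by rcases hsq with h0 | h0 <;> omega
  have hr₁ := rank_pos_of_mukaiPair_lt_two hn hd hr.le hp.le ha hd₁ hD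
    (bounds_of_mukaiSq_eq hsq).1 hpair2
  exact ⟨hsq, hd₁, deg_le_of_memD_twist hn hr hp hr₁ hd₁ hv h, hpair,
    slope_pos_of_memD_twist hn.le hp.le hr₁ hd₁ h⟩

end Twist

theorem D_of_twist_general (n r d a p : ℤ) (hn : 0 < n) (hr : 0 < r) (hd : 0 < d)
    (hv : -2 ≤ mukaiSq n r d a) (hp : 0 < p)
    (ha : -(p * d * n) ≤ a) :
    ∀ r₁' d₁' a₁' : ℤ,
      memD n r (d + r * p) (a + 2 * n * d * p + n * r * p ^ 2) r₁' d₁' a₁' →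
      ¬(r₁' = 1 ∧ d₁' = p ∧ a₁' = n * p ^ 2 + 1) →
      memD n r d a r₁' (d₁' - r₁' * p)
        (a₁' + n * r₁' * p ^ 2 - 2 * n * d₁' * p) := by
  intro r₁ D a₁ h hne
  have hD : twistD r₁ (D - r₁ * p) p = D := by unfold twistD; ring
  have ha₁ : twistA n r₁ (D - r₁ * p) (a₁ + n * r₁ * p ^ 2 - 2 * n * D * p) p = a₁ := by
    unfold twistA; ring
  refine memD_of_memD_twist hn hr hd hv hp (by linarith) (by rwa [hD, ha₁]) ?_
  rintro ⟨rfl, hd₁, hb⟩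
  obtain rfl : D = p := by linarith
  exact hne ⟨rfl, rfl, by linarith⟩

/-- walls for the twist `e^{pH}·v` come from walls for `v`:
every `v₁' ∈ D_{e^{pH}·v}` other than `(1, p, np² + 1)` satisfies
`e^{−pH}·v₁' ∈ D_v`. -/
theorem D_of_twist (n r d a p : ℤ) (hn : 0 < n) (hr : 0 < r) (hd : 0 < d)
    (hv : -2 ≤ mukaiSq n r d a) (hp : 0 < p)
    (ha : -(p * d * n) ≤ a) (ha' : n = 1 → p = 1 → -(p * d * n) < a) :
    ∀ r₁' d₁' a₁' : ℤ,
      memD n r (d + r * p) (a + 2 * n * d * p + n * r * p ^ 2) r₁' d₁' a₁' →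
      ¬(r₁' = 1 ∧ d₁' = p ∧ a₁' = n * p ^ 2 + 1) →
      memD n r d a r₁' (d₁' - r₁' * p)
        (a₁' + n * r₁' * p ^ 2 - 2 * n * d₁' * p) :=
  D_of_twist_general n r d a p hn hr hd hv hp ha
end

section
/- Let n and d be positive integers, set a = ⌊(nd² + 1)/2⌋, and let v = (2, d, a). If v₁ = (r₁, d₁, a₁) ∈ D_v^{BN}, then n = 1, v₁ = (1, 1, 2), and v = (2, 3, 5). -/
/-! Multiplying the Brill–Noether inequality `d r₁ - 2 d₁ ≤ d a₁ - d₁ a` by `2 r₁` and using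
`2a ≥ nd²`, `r₁ a₁ ≤ n d₁² + 1` (from `v₁² ≥ -2`) gives
`(2 r₁ + n d d₁)(d r₁ - 2 d₁) ≤ 2d`. As `d r₁ - 2 d₁ ≥ 1`, this forces `n = d₁ = 1` and
`v₁² = -2`, so `r₁ a₁ = 2`, and the two cases `r₁ = 1, 2` leave only `d = 3`, `r₁ = 1`. -/

theorem mukaiSq_two_half_nonpos (n d : ℤ) : mukaiSq n 2 d ((n * d ^ 2 + 1) / 2) ≤ 0 := by
  rw [mukaiSq, mul_assoc]
  omega

/-- The identity behind it is
`2 r r₁ (d a₁ - d₁ a) + 2 n d d₁ (d r₁ - d₁ r) = r₁ d₁ v² - r d v₁²`. -/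
theorem mul_bn_le_mukaiSq (n r d a r₁ d₁ a₁ : ℤ) (hr : 0 ≤ r * r₁)
    (h : d * r₁ - d₁ * r ≤ d * a₁ - d₁ * a) :
    2 * (r * r₁ + n * d * d₁) * (d * r₁ - d₁ * r) ≤
      r₁ * d₁ * mukaiSq n r d a - r * d * mukaiSq n r₁ d₁ a₁ := by
  unfold mukaiSq
  linear_combination 2 * mul_le_mul_of_nonneg_left h hr

theorem rank_two_bn_eq {n d r₁ d₁ a₁ : ℤ} (hn : 0 < n) (hd : 0 < d) (hd₁ : 0 < d₁)
    (hr₁ : 0 < r₁) (hp : 0 < d * r₁ - d₁ * 2)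
    (hδ : r₁ * a₁ = n * d₁ ^ 2 ∨ r₁ * a₁ = n * d₁ ^ 2 + 1)
    (hkey : (2 * r₁ + n * d * d₁) * (d * r₁ - d₁ * 2) ≤ 2 * d * (r₁ * a₁ - n * d₁ ^ 2)) :
    n = 1 ∧ r₁ = 1 ∧ d₁ = 1 ∧ a₁ = 2 ∧ d = 3 := by
  have hδ₁ : r₁ * a₁ = n * d₁ ^ 2 + 1 := hδ.resolve_left fun h₀ => by
    rw [h₀, sub_self, mul_zero] at hkey
    nlinarith [mul_pos (mul_pos hn hd) hd₁]
  rw [hδ₁, add_sub_cancel_left, mul_one] at hkey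
  obtain ⟨rfl, rfl⟩ : n = 1 ∧ d₁ = 1 := by
    have hnd : n * d * d₁ < 2 * d := by nlinarith
    have : n * d₁ < 2 := by nlinarith
    constructor <;> nlinarith
  have hr₁a₁ : r₁ * a₁ = 2 := by linarith
  have hr₁_le : r₁ ≤ 2 := Int.le_of_dvd two_pos ⟨a₁, hr₁a₁.symm⟩
  interval_cases r₁
  · refine ⟨rfl, rfl, rfl, by linarith, ?_⟩
    nlinarith
  · nlinarith

theorem DBN_rank_two_general (n d r₁ d₁ a₁ : ℤ) (hn : 0 < n)
    (h : memDBN n 2 d ((n * d ^ 2 + 1) / 2) r₁ d₁ a₁) :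
    n = 1 ∧ r₁ = 1 ∧ d₁ = 1 ∧ a₁ = 2 ∧ d = 3 ∧ (n * d ^ 2 + 1) / 2 = 5 := by
  obtain ⟨⟨hsq, hd₁, hd₁d, -, -⟩, hp, hbn⟩ := h
  have hd : 0 < d := hd₁.trans_le hd₁d
  have hr₁ : 0 < r₁ := pos_of_mul_pos_right (by linarith : 0 < d * r₁) hd.le
  have hbound := mul_bn_le_mukaiSq n 2 d _ r₁ d₁ a₁ (by positivity) hbn
  have hv : r₁ * d₁ * mukaiSq n 2 d ((n * d ^ 2 + 1) / 2) ≤ 0 :=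
    mul_nonpos_of_nonneg_of_nonpos (by positivity) (mukaiSq_two_half_nonpos n d)
  have hkey : (2 * r₁ + n * d * d₁) * (d * r₁ - d₁ * 2) ≤ 2 * d * (r₁ * a₁ - n * d₁ ^ 2) := by
    unfold mukaiSq at hbound hv
    linarith
  have hδ : r₁ * a₁ = n * d₁ ^ 2 ∨ r₁ * a₁ = n * d₁ ^ 2 + 1 := by
    unfold mukaiSq at hsq
    exact hsq.imp (fun _ => by linarith) (fun _ => by linarith)
  obtain ⟨rfl, rfl, rfl, rfl, rfl⟩ := rank_two_bn_eq hn hd hd₁ hr₁ hp hδ hkey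
  norm_num

/-- for `v = (2, d, ⌊(nd² + 1)/2⌋)`, if `v₁ ∈ D_v^{BN}` then
`n = 1`, `v₁ = (1, 1, 2)` and `v = (2, 3, 5)`. -/
theorem DBN_rank_two (n d r₁ d₁ a₁ : ℤ) (hn : 0 < n) (hd : 0 < d)
    (h : memDBN n 2 d ((n * d ^ 2 + 1) / 2) r₁ d₁ a₁) :
    n = 1 ∧ r₁ = 1 ∧ d₁ = 1 ∧ a₁ = 2 ∧ d = 3 ∧ (n * d ^ 2 + 1) / 2 = 5 :=
  DBN_rank_two_general n d r₁ d₁ a₁ hn h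
end
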